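/- arXiv:2408.00377 — 6 statements merged into one kernel-verified Lean document; each statement's English description precedes it below -/
import Mathlib

section
/- For every real number q with 0 < q < 1, the double series ∑_{m,n ≥ 0} (-1)^{(n-m)(n-m-1)/2} · q^{(3m² + 2mn + 3n²)/4} / ((q;q)_m (q;q)_n) equals the single series ∑_{n=0}^{∞} q^{2n²} / (q²;q²)_n. -/
open Finset

namespace Stmt6

noncomputable def P (q : ℝ) (n : ℕ) : ℝ := ∏ k ∈ Finset.range n, (1 - q ^ (k + 1))
noncomputable def Q (q : ℝ) (n : ℕ) : ℝ := ∏ k ∈ Finset.range n, (1 - q ^ (2 * k + 2))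
noncomputable def Od (q : ℝ) (n : ℕ) : ℝ := ∏ k ∈ Finset.range n, (1 - q ^ (2 * k + 1))

/-- `E n k = (k-n)²` computed in ℕ with truncated subtraction trick. -/
def E (n k : ℕ) : ℕ := (k - n) ^ 2 + (n - k) ^ 2

noncomputable def B (q : ℝ) (n k : ℕ) : ℝ :=
  if k ≤ n then P q n / (P q k * P q (n - k)) else 0

noncomputable def F (q : ℝ) (p : ℕ × ℕ) : ℝ :=
  (-1 : ℝ) ^ ((((p.2 : ℤ) - (p.1 : ℤ)) * (((p.2 : ℤ) - (p.1 : ℤ)) - 1)) / 2) *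
    q ^ ((3 * (p.1 : ℝ) ^ 2 + 2 * (p.1 : ℝ) * (p.2 : ℝ) + 3 * (p.2 : ℝ) ^ 2) / 4) /
    (P q p.1 * P q p.2)

noncomputable def U (q : ℝ) (n : ℕ) : ℝ :=
  ∑ k ∈ Finset.range (2 * n + 1), (-1 : ℝ) ^ (k + n) * q ^ E n k * B q (2 * n) k

noncomputable def G (q : ℝ) (s : ℕ) : ℝ := ∑ k ∈ Finset.range (s + 1), F q (k, s - k)

variable {q : ℝ}

lemma one_sub_pow_pos (hq0 : 0 < q) (hq1 : q < 1) (m : ℕ) (hm : 1 ≤ m) :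
    0 < 1 - q ^ m := by
  have : q ^ m < 1 := pow_lt_one₀ hq0.le hq1 (by omega)
  linarith

lemma P_pos (hq0 : 0 < q) (hq1 : q < 1) (n : ℕ) : 0 < P q n := by
  apply Finset.prod_pos
  intro k _
  exact one_sub_pow_pos hq0 hq1 (k + 1) (by omega)

lemma Q_pos (hq0 : 0 < q) (hq1 : q < 1) (n : ℕ) : 0 < Q q n := by
  apply Finset.prod_pos
  intro k _
  exact one_sub_pow_pos hq0 hq1 (2 * k + 2) (by omega)

lemma Od_pos (hq0 : 0 < q) (hq1 : q < 1) (n : ℕ) : 0 < Od q n := by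
  apply Finset.prod_pos
  intro k _
  exact one_sub_pow_pos hq0 hq1 (2 * k + 1) (by omega)

lemma P_succ (n : ℕ) : P q (n + 1) = P q n * (1 - q ^ (n + 1)) :=
  Finset.prod_range_succ _ n

lemma P_zero : P q 0 = 1 := rfl

lemma B_zero (hq0 : 0 < q) (hq1 : q < 1) (n : ℕ) : B q n 0 = 1 := by
  have h := (P_pos hq0 hq1 n).ne'
  simp [B, P_zero, div_self h]

lemma B_of_gt {n k : ℕ} (h : n < k) : B q n k = 0 := by
  simp [B, Nat.not_le.mpr h]

lemma B_eq (n k : ℕ) (h : k ≤ n) : B q n k = P q n / (P q k * P q (n - k)) := by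
  simp [B, h]

lemma pascal (hq0 : 0 < q) (hq1 : q < 1) (n k : ℕ) :
    B q (n + 1) (k + 1) = B q n k + q ^ (k + 1) * B q n (k + 1) := by
  rcases Nat.lt_or_ge k n with h | h
  · -- k + 1 ≤ n
    have hk1 : k + 1 ≤ n := h
    have e1 : B q (n + 1) (k + 1) = P q (n + 1) / (P q (k + 1) * P q (n - k)) := by
      rw [B_eq _ _ (by omega), show n + 1 - (k + 1) = n - k by omega]
    have e2 : B q n k = P q n / (P q k * P q (n - k)) := B_eq _ _ (by omega)
    have e3 : B q n (k + 1) = P q n / (P q (k + 1) * P q (n - k - 1)) := by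
      rw [B_eq _ _ hk1, show n - (k + 1) = n - k - 1 by omega]
    rw [e1, e2, e3, P_succ, P_succ (n := k),
      show n - k = (n - k - 1) + 1 by omega, P_succ (n := n - k - 1)]
    have hP1 := (P_pos hq0 hq1 k).ne'
    have hP2 := (P_pos hq0 hq1 (n - k - 1)).ne'
    have hPn := (P_pos hq0 hq1 n).ne'
    have hc1 := (one_sub_pow_pos hq0 hq1 (k + 1) (by omega)).ne'
    have hc2 := (one_sub_pow_pos hq0 hq1 (n - k - 1 + 1) (by omega)).ne'
    have hpow : q ^ (k + 1) * q ^ (n - k - 1 + 1) = q ^ (n + 1) := by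
      rw [← pow_add]
      congr 1
      omega
    have hkey : (1:ℝ) - q ^ (n + 1) = (1 - q ^ (k + 1)) + q ^ (k + 1) * (1 - q ^ (n - k - 1 + 1)) := by
      rw [mul_sub, mul_one, hpow]
      ring
    rw [hkey]
    simp only [Nat.add_sub_cancel]
    field_simp
  · rcases Nat.eq_or_lt_of_le h with rfl | h2
    · -- k = n
      rw [B_eq _ _ (le_refl (n + 1)), B_eq _ _ (le_refl n), B_of_gt (by omega)]
      have h1 := (P_pos hq0 hq1 (n + 1)).ne'
      have h2 := (P_pos hq0 hq1 n).ne'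
      simp [Nat.sub_self, P_zero, div_self, h1, h2]
    · rw [B_of_gt (by omega), B_of_gt (by omega), B_of_gt (by omega)]
      ring

lemma absorb (hq0 : 0 < q) (hq1 : q < 1) (n k : ℕ) (h : k ≤ n) :
    (1 - q ^ (n + 1 - k)) * B q (n + 1) k = (1 - q ^ (n + 1)) * B q n k := by
  rw [B_eq _ _ (by omega), B_eq _ _ h, P_succ,
    show n + 1 - k = (n - k) + 1 by omega, P_succ (n := n - k)]
  have hP1 := (P_pos hq0 hq1 k).ne'
  have hP2 := (P_pos hq0 hq1 (n - k)).ne'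
  have hPn := (P_pos hq0 hq1 n).ne'
  have hc2 := (one_sub_pow_pos hq0 hq1 (n - k + 1) (by omega)).ne'
  field_simp

lemma E_shift (n k : ℕ) : E (n + 1) (k + 1) = E n k := by
  simp [E, Nat.succ_sub_succ]

lemma E_step (n k : ℕ) (h : k ≤ 2 * n + 1) :
    E (n + 1) k + k = E (n + 1) (k + 1) + (2 * n + 1 - k) := by
  rcases le_or_gt k n with h1 | h1
  · obtain ⟨d, rfl⟩ : ∃ d, n = k + d := ⟨n - k, by omega⟩
    simp only [E, show k - (k + d + 1) = 0 by omega, show k + d + 1 - k = d + 1 by omega,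
      show k + 1 - (k + d + 1) = 0 by omega, show k + d + 1 - (k + 1) = d by omega,
      show 2 * (k + d) + 1 - k = k + 2 * d + 1 by omega]
    ring
  · obtain ⟨j, rfl⟩ : ∃ j, k = n + 1 + j := ⟨k - (n + 1), by omega⟩
    have hj : j ≤ n := by omega
    simp only [E, show n + 1 + j - (n + 1) = j by omega, show n + 1 - (n + 1 + j) = 0 by omega,
      show n + 1 + j + 1 - (n + 1) = j + 1 by omega,
      show n + 1 - (n + 1 + j + 1) = 0 by omega,
      show 2 * n + 1 - (n + 1 + j) = n - j by omega]
    obtain ⟨m, rfl⟩ : ∃ m, n = j + m := ⟨n - j, by omega⟩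
    simp only [show j + m - j = m by omega]
    ring

lemma E_zero (n : ℕ) : E n 0 = n ^ 2 := by simp [E]

lemma U_zero : U q 0 = 1 := by
  have : B q 0 0 = 1 := by simp [B, P_zero]
  simp [U, E, this]

lemma U_rec (hq0 : 0 < q) (hq1 : q < 1) (n : ℕ) :
    U q (n + 1) = (1 - q ^ (2 * n + 1)) * U q n := by
  have hsign : ∀ k : ℕ, (-1 : ℝ) ^ (k + 1 + (n + 1)) = (-1 : ℝ) ^ (k + n) := by
    intro k
    rw [show k + 1 + (n + 1) = (k + n) + 2 by ring, pow_add]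
    norm_num
  set h' : ℕ → ℝ := fun k => (-1 : ℝ) ^ (k + n + 1) * q ^ (E (n + 1) k + k) * B q (2 * n + 1) k
    with hh'
  have step1 : U q (n + 1) =
      (∑ k ∈ Finset.range (2 * n + 2),
        (-1 : ℝ) ^ (k + n) * q ^ E (n + 1) (k + 1) * B q (2 * n + 2) (k + 1))
      + (-1 : ℝ) ^ (n + 1) * q ^ E (n + 1) 0 * B q (2 * n + 2) 0 := by
    rw [U, show 2 * (n + 1) + 1 = (2 * n + 2) + 1 by ring, Finset.sum_range_succ']
    simp only [hsign, zero_add, show 2 * (n + 1) = 2 * n + 2 from by ring]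
  have step2 : U q (n + 1) =
      (∑ k ∈ Finset.range (2 * n + 2),
        (-1 : ℝ) ^ (k + n) * q ^ E (n + 1) (k + 1) * B q (2 * n + 1) k)
      + ((∑ k ∈ Finset.range (2 * n + 2), h' (k + 1))
      + (-1 : ℝ) ^ (n + 1) * q ^ E (n + 1) 0 * B q (2 * n + 2) 0) := by
    rw [step1, ← add_assoc, ← Finset.sum_add_distrib]
    congr 1
    apply Finset.sum_congr rfl
    intro k _
    rw [show (2 : ℕ) * n + 2 = (2 * n + 1) + 1 by ring, pascal hq0 hq1]
    simp only [hh']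
    rw [show k + 1 + n + 1 = (k + n) + 2 by ring, pow_add, pow_add q (E (n + 1) (k + 1)) (k + 1)]
    ring_nf
  have hB0 : B q (2 * n + 2) 0 = 1 := B_zero hq0 hq1 _
  have hB0' : B q (2 * n + 1) 0 = 1 := B_zero hq0 hq1 _
  have step3 : (∑ k ∈ Finset.range (2 * n + 2), h' (k + 1))
      + (-1 : ℝ) ^ (n + 1) * q ^ E (n + 1) 0 * B q (2 * n + 2) 0
      = ∑ k ∈ Finset.range (2 * n + 2), h' k := by
    have hs := Finset.sum_range_succ' h' (2 * n + 2)
    have hs2 := Finset.sum_range_succ h' (2 * n + 2)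
    have htop : h' (2 * n + 2) = 0 := by
      simp only [hh']
      rw [B_of_gt (by omega)]
      ring
    have hzero : h' 0 = (-1 : ℝ) ^ (n + 1) * q ^ E (n + 1) 0 * B q (2 * n + 2) 0 := by
      simp only [hh', hB0, hB0', zero_add, add_zero, Nat.zero_add]
    rw [hzero] at hs
    rw [htop, add_zero] at hs2
    rw [← hs2, hs]
  have step4 : U q (n + 1) = ∑ k ∈ Finset.range (2 * n + 2),
      (-1 : ℝ) ^ (k + n) * q ^ E (n + 1) (k + 1) * ((1 - q ^ (2 * n + 1 - k)) * B q (2 * n + 1) k) := by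
    rw [step2, step3, ← Finset.sum_add_distrib]
    apply Finset.sum_congr rfl
    intro k hk
    have hk' : k ≤ 2 * n + 1 := by
      have := Finset.mem_range.mp hk
      omega
    have hE := E_step n k hk'
    have hq : q ^ (E (n + 1) k + k) = q ^ E (n + 1) (k + 1) * q ^ (2 * n + 1 - k) := by
      rw [← pow_add, hE]
    simp only [hh', hq, pow_succ]
    ring
  rw [step4, Finset.sum_range_succ]
  rw [show 2 * n + 1 - (2 * n + 1) = 0 by omega]
  simp only [pow_zero, sub_self, zero_mul, mul_zero, add_zero]
  rw [U, Finset.mul_sum]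
  apply Finset.sum_congr rfl
  intro k hk
  have hk' : k ≤ 2 * n := by
    have := Finset.mem_range.mp hk
    omega
  have habs := absorb hq0 hq1 (2 * n) k hk'
  rw [E_shift]
  calc (-1 : ℝ) ^ (k + n) * q ^ E n k * ((1 - q ^ (2 * n + 1 - k)) * B q (2 * n + 1) k)
      = (-1 : ℝ) ^ (k + n) * q ^ E n k * ((1 - q ^ (2 * n + 1)) * B q (2 * n) k) := by
        rw [show (2:ℕ) * n + 1 - k = 2 * n + 1 - k from rfl] at habs
        rw [show (2:ℕ) * n + 1 = 2 * n + 1 from rfl]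
        rw [show ((1 : ℝ) - q ^ (2 * n + 1 - k)) * B q (2 * n + 1) k
            = (1 - q ^ (2 * n + 1)) * B q (2 * n) k from habs]
    _ = (1 - q ^ (2 * n + 1)) * ((-1 : ℝ) ^ (k + n) * q ^ E n k * B q (2 * n) k) := by ring

lemma U_eq_Od (hq0 : 0 < q) (hq1 : q < 1) (n : ℕ) : U q n = Od q n := by
  induction n with
  | zero => simp [U_zero, Od]
  | succ n ih =>
      rw [U_rec hq0 hq1 n, ih]
      simp only [Od, Finset.prod_range_succ]
      ring

lemma P_even (n : ℕ) : P q (2 * n) = Od q n * Q q n := by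
  induction n with
  | zero => simp [P_zero, Od, Q]
  | succ n ih =>
      have h1 : 2 * (n + 1) = (2 * n + 1) + 1 := by ring
      rw [h1, P_succ, P_succ, ih]
      simp only [Od, Q, Finset.prod_range_succ]
      ring

lemma key (hq0 : 0 < q) (hq1 : q < 1) (n : ℕ) :
    ∑ k ∈ Finset.range (2 * n + 1),
      (-1 : ℝ) ^ (k + n) * q ^ E n k / (P q k * P q (2 * n - k)) = 1 / Q q n := by
  have hPn := (P_pos hq0 hq1 (2 * n)).ne'
  have hsum : P q (2 * n) * (∑ k ∈ Finset.range (2 * n + 1),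
      (-1 : ℝ) ^ (k + n) * q ^ E n k / (P q k * P q (2 * n - k))) = U q n := by
    rw [U, Finset.mul_sum]
    apply Finset.sum_congr rfl
    intro k hk
    have hk' : k ≤ 2 * n := by
      have := Finset.mem_range.mp hk
      omega
    rw [B_eq _ _ hk']
    have h1 := (P_pos hq0 hq1 k).ne'
    have h2 := (P_pos hq0 hq1 (2 * n - k)).ne'
    field_simp
  have hU : U q n = Od q n := U_eq_Od hq0 hq1 n
  have hOd := (Od_pos hq0 hq1 n).ne'
  have hQ := (Q_pos hq0 hq1 n).ne'
  have hPe : P q (2 * n) = Od q n * Q q n := P_even n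
  rw [hU, hPe] at hsum
  have h2 : Q q n * (∑ k ∈ Finset.range (2 * n + 1),
      (-1 : ℝ) ^ (k + n) * q ^ E n k / (P q k * P q (2 * n - k))) = 1 := by
    apply mul_left_cancel₀ hOd
    rw [← mul_assoc, mul_one]
    exact hsum
  rw [eq_div_iff hQ]
  linear_combination h2


section analytic

variable {q : ℝ}

lemma F_swap (m n : ℕ) (h : Odd (m + n)) : F q (n, m) = - F q (m, n) := by
  obtain ⟨j, hj⟩ := h
  set d : ℤ := (n : ℤ) - m with hdd
  have hd : Odd d := ⟨(j : ℤ) - m, by rw [hdd]; push_cast; omega⟩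
  have h1 : ((m : ℤ) - n) * (((m : ℤ) - n) - 1) = d * (d + 1) := by rw [hdd]; ring
  have h2 : d * (d + 1) / 2 = d * (d - 1) / 2 + d := by
    rw [show d * (d + 1) = d * (d - 1) + d * 2 by ring,
      Int.add_mul_ediv_right _ _ (by norm_num : (2 : ℤ) ≠ 0)]
  have h3 : (-1 : ℝ) ^ (((m : ℤ) - n) * (((m : ℤ) - n) - 1) / 2)
      = -(-1 : ℝ) ^ (d * (d - 1) / 2) := by
    rw [h1, h2, zpow_add₀ (by norm_num : (-1 : ℝ) ≠ 0), hd.neg_one_zpow]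
    ring
  have hexp : (3 * (n : ℝ) ^ 2 + 2 * (n : ℝ) * (m : ℝ) + 3 * (m : ℝ) ^ 2) / 4
      = (3 * (m : ℝ) ^ 2 + 2 * (m : ℝ) * (n : ℝ) + 3 * (n : ℝ) ^ 2) / 4 := by ring
  simp only [F]
  rw [h3, hexp, mul_comm (P q n) (P q m)]
  ring

lemma sign_even (t k : ℕ) (hk : k ≤ 2 * t) :
    (-1 : ℝ) ^ ((((2 * t - k : ℕ) : ℤ) - k) * ((((2 * t - k : ℕ) : ℤ) - k) - 1) / 2)
      = (-1 : ℝ) ^ (k + t) := by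
  have hc : ((2 * t - k : ℕ) : ℤ) - k = 2 * ((t : ℤ) - k) := by omega
  rw [hc]
  set a : ℤ := (t : ℤ) - k with ha
  rw [show 2 * a * (2 * a - 1) = 2 * (a * (2 * a - 1)) by ring,
    Int.mul_ediv_cancel_left _ (by norm_num : (2 : ℤ) ≠ 0)]
  rcases Int.even_or_odd a with hpa | hpa
  · have h1 : Even (a * (2 * a - 1)) := hpa.mul_right _
    have h2 : Even (k + t) := by
      obtain ⟨c, hc2⟩ := hpa
      rw [Nat.even_iff]
      omega
    rw [h1.neg_one_zpow, h2.neg_one_pow]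
  · have hodd2 : Odd (2 * a - 1) := ⟨a - 1, by ring⟩
    have h1 : Odd (a * (2 * a - 1)) := hpa.mul hodd2
    have h2 : Odd (k + t) := by
      obtain ⟨c, hc2⟩ := hpa
      rw [Nat.odd_iff]
      omega
    rw [h1.neg_one_zpow, h2.neg_one_pow]

lemma E_cast (t k : ℕ) : ((E t k : ℕ) : ℝ) = ((t : ℝ) - k) ^ 2 := by
  rcases le_or_gt k t with h | h
  · obtain ⟨d, rfl⟩ : ∃ d, t = k + d := ⟨t - k, by omega⟩
    simp only [E, show k - (k + d) = 0 by omega, show k + d - k = d by omega]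
    push_cast
    ring
  · obtain ⟨d, rfl⟩ : ∃ d, k = t + d := ⟨k - t, by omega⟩
    simp only [E, show t + d - t = d by omega, show t - (t + d) = 0 by omega]
    push_cast
    ring

lemma rexp_even (hq0 : 0 < q) (t k : ℕ) (hk : k ≤ 2 * t) :
    q ^ ((3 * (k : ℝ) ^ 2 + 2 * (k : ℝ) * ((2 * t - k : ℕ) : ℝ)
        + 3 * ((2 * t - k : ℕ) : ℝ) ^ 2) / 4)
      = q ^ (2 * t ^ 2) * q ^ (E t k) := by
  have hc : ((2 * t - k : ℕ) : ℝ) = 2 * (t : ℝ) - k := by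
    have h1 : ((2 * t - k : ℕ) : ℤ) = 2 * (t : ℤ) - k := by omega
    have := congrArg (fun z : ℤ => (z : ℝ)) h1
    push_cast at this
    exact this
  have hexp : (3 * (k : ℝ) ^ 2 + 2 * (k : ℝ) * ((2 * t - k : ℕ) : ℝ)
      + 3 * ((2 * t - k : ℕ) : ℝ) ^ 2) / 4 = ((2 * t ^ 2 + E t k : ℕ) : ℝ) := by
    rw [hc]
    push_cast [E_cast]
    ring
  rw [hexp, Real.rpow_natCast, pow_add]

lemma F_eq_even (hq0 : 0 < q) (t k : ℕ) (hk : k ≤ 2 * t) :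
    F q (k, 2 * t - k)
      = (-1 : ℝ) ^ (k + t) * (q ^ (2 * t ^ 2) * q ^ (E t k)) / (P q k * P q (2 * t - k)) := by
  simp only [F]
  rw [sign_even t k hk, rexp_even hq0 t k hk]

lemma G_even (hq0 : 0 < q) (hq1 : q < 1) (t : ℕ) :
    G q (2 * t) = q ^ (2 * t ^ 2) * (1 / Q q t) := by
  rw [G, ← key hq0 hq1 t, Finset.mul_sum]
  apply Finset.sum_congr rfl
  intro k hk
  have hk' : k ≤ 2 * t := by
    have := Finset.mem_range.mp hk
    omega
  rw [F_eq_even hq0 t k hk']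
  ring

lemma G_odd (hq0 : 0 < q) (hq1 : q < 1) (t : ℕ) : G q (2 * t + 1) = 0 := by
  have hrefl := Finset.sum_range_reflect (fun k => F q (k, 2 * t + 1 - k)) (2 * t + 2)
  have h2 : ∀ j ∈ Finset.range (2 * t + 2),
      F q (2 * t + 2 - 1 - j, 2 * t + 1 - (2 * t + 2 - 1 - j)) = - F q (j, 2 * t + 1 - j) := by
    intro j hj
    have hj' : j ≤ 2 * t + 1 := by
      have := Finset.mem_range.mp hj
      omega
    rw [show 2 * t + 2 - 1 - j = 2 * t + 1 - j by omega,
      show 2 * t + 1 - (2 * t + 1 - j) = j by omega]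
    exact F_swap j (2 * t + 1 - j) (by rw [show j + (2 * t + 1 - j) = 2 * t + 1 by omega]; exact ⟨t, by ring⟩)
  have h3 : G q (2 * t + 1) = - G q (2 * t + 1) := by
    conv_lhs => rw [G, show 2 * t + 1 + 1 = 2 * t + 2 by omega, ← hrefl]
    rw [Finset.sum_congr rfl h2, Finset.sum_neg_distrib, G,
      show 2 * t + 1 + 1 = 2 * t + 2 by omega]
  linarith

lemma P_lb (hq0 : 0 < q) (hq1 : q < 1) (n : ℕ) : (1 - q) ^ n ≤ P q n := by
  calc (1 - q) ^ n = ∏ _k ∈ Finset.range n, (1 - q) := by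
        rw [Finset.prod_const, Finset.card_range]
    _ ≤ P q n := by
        apply Finset.prod_le_prod
        · intro i _
          linarith
        · intro i _
          have : q ^ (i + 1) ≤ q ^ 1 := pow_le_pow_of_le_one hq0.le hq1.le (by omega)
          rw [pow_one] at this
          linarith

lemma Pinv_le (hq0 : 0 < q) (hq1 : q < 1) (n : ℕ) : (P q n)⁻¹ ≤ ((1 - q)⁻¹) ^ n := by
  have hq : (0 : ℝ) < 1 - q := by linarith
  rw [inv_pow]
  have h1 : (0 : ℝ) < (1 - q) ^ n := by positivity
  exact inv_anti₀ h1 (P_lb hq0 hq1 n)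

noncomputable def bb (q : ℝ) (m : ℕ) : ℝ := q ^ (m * m / 2) * ((1 - q)⁻¹) ^ m

lemma bb_pos (hq0 : 0 < q) (hq1 : q < 1) (m : ℕ) : 0 < bb q m := by
  have h1 : (0 : ℝ) < 1 - q := by linarith
  rw [bb]
  positivity

lemma summable_bb (hq0 : 0 < q) (hq1 : q < 1) : Summable (bb q) := by
  have h1 : (0 : ℝ) < 1 - q := by linarith
  have hC : (0 : ℝ) < (1 - q)⁻¹ := by positivity
  have ht : Filter.Tendsto (fun m : ℕ => q ^ m * (1 - q)⁻¹) Filter.atTop (nhds (0 * (1 - q)⁻¹)) :=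
    (tendsto_pow_atTop_nhds_zero_of_lt_one hq0.le hq1).mul_const _
  rw [zero_mul] at ht
  have hev : ∀ᶠ m : ℕ in Filter.atTop, q ^ m * (1 - q)⁻¹ ≤ 1 / 2 :=
    ht.eventually_le_const (by norm_num)
  apply summable_of_ratio_norm_eventually_le (r := 1 / 2) (by norm_num)
  filter_upwards [hev] with m hm
  have hdiv : m * m / 2 + m ≤ (m + 1) * (m + 1) / 2 := by
    have e : (m + 1) * (m + 1) = m * m + 2 * m + 1 := by ring
    omega
  have hpow : q ^ ((m + 1) * (m + 1) / 2) ≤ q ^ (m * m / 2) * q ^ m := by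
    rw [← pow_add]
    exact pow_le_pow_of_le_one hq0.le hq1.le hdiv
  have hb1 : (0 : ℝ) ≤ bb q m := (bb_pos hq0 hq1 m).le
  have hb2 : (0 : ℝ) ≤ bb q (m + 1) := (bb_pos hq0 hq1 (m + 1)).le
  rw [Real.norm_of_nonneg hb2, Real.norm_of_nonneg hb1]
  calc bb q (m + 1) = q ^ ((m + 1) * (m + 1) / 2) * (((1 - q)⁻¹) ^ m * (1 - q)⁻¹) := by
        rw [bb, pow_succ]
    _ ≤ (q ^ (m * m / 2) * q ^ m) * (((1 - q)⁻¹) ^ m * (1 - q)⁻¹) := by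
        apply mul_le_mul_of_nonneg_right hpow
        positivity
    _ = (q ^ m * (1 - q)⁻¹) * bb q m := by rw [bb]; ring
    _ ≤ (1 / 2) * bb q m := mul_le_mul_of_nonneg_right hm hb1

lemma abs_F_le (hq0 : 0 < q) (hq1 : q < 1) (p : ℕ × ℕ) :
    |F q p| ≤ bb q p.1 * bb q p.2 := by
  obtain ⟨m, n⟩ := p
  have hPm := P_pos hq0 hq1 m
  have hPn := P_pos hq0 hq1 n
  have hX : (0 : ℝ) ≤ q ^ ((3 * (m : ℝ) ^ 2 + 2 * (m : ℝ) * (n : ℝ) + 3 * (n : ℝ) ^ 2) / 4) :=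
    (Real.rpow_pos_of_pos hq0 _).le
  have hsgn : ∀ z : ℤ, |(-1 : ℝ) ^ z| = 1 := by
    intro z
    rcases Int.even_or_odd z with h | h
    · rw [h.neg_one_zpow]
      norm_num
    · rw [h.neg_one_zpow]
      norm_num
  have habs : |F q (m, n)|
      = q ^ ((3 * (m : ℝ) ^ 2 + 2 * (m : ℝ) * (n : ℝ) + 3 * (n : ℝ) ^ 2) / 4)
        / (P q m * P q n) := by
    simp only [F]
    rw [abs_div, abs_mul, hsgn, one_mul,
      abs_of_nonneg hX, abs_of_pos (mul_pos hPm hPn)]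
  rw [habs]
  have hle : ((m * m / 2 + n * n / 2 : ℕ) : ℝ)
      ≤ (3 * (m : ℝ) ^ 2 + 2 * (m : ℝ) * (n : ℝ) + 3 * (n : ℝ) ^ 2) / 4 := by
    have h1 : ((m * m / 2 : ℕ) : ℝ) ≤ ((m * m : ℕ) : ℝ) / 2 := Nat.cast_div_le
    have h2 : ((n * n / 2 : ℕ) : ℝ) ≤ ((n * n : ℕ) : ℝ) / 2 := Nat.cast_div_le
    push_cast at h1 h2 ⊢
    nlinarith [sq_nonneg ((m : ℝ) + (n : ℝ)), sq_nonneg ((m : ℝ) - (n : ℝ))]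
  have hX2 : q ^ ((3 * (m : ℝ) ^ 2 + 2 * (m : ℝ) * (n : ℝ) + 3 * (n : ℝ) ^ 2) / 4)
      ≤ q ^ (m * m / 2) * q ^ (n * n / 2) := by
    have := Real.rpow_le_rpow_of_exponent_ge hq0 hq1.le hle
    rwa [Real.rpow_natCast, pow_add] at this
  have hD : (P q m * P q n)⁻¹ ≤ ((1 - q)⁻¹) ^ m * ((1 - q)⁻¹) ^ n := by
    rw [mul_inv]
    have hq' : (0 : ℝ) < 1 - q := by linarith
    exact mul_le_mul (Pinv_le hq0 hq1 m) (Pinv_le hq0 hq1 n)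
      (inv_nonneg.mpr hPn.le) (pow_nonneg (inv_nonneg.mpr hq'.le) m)
  rw [div_eq_mul_inv]
  calc q ^ ((3 * (m : ℝ) ^ 2 + 2 * (m : ℝ) * (n : ℝ) + 3 * (n : ℝ) ^ 2) / 4)
        * (P q m * P q n)⁻¹
      ≤ (q ^ (m * m / 2) * q ^ (n * n / 2)) * (((1 - q)⁻¹) ^ m * ((1 - q)⁻¹) ^ n) := by
        have hq' : (0 : ℝ) < 1 - q := by linarith
        apply mul_le_mul hX2 hD
          (inv_nonneg.mpr (mul_pos hPm hPn).le)
          (mul_nonneg (pow_nonneg hq0.le _) (pow_nonneg hq0.le _))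
    _ = bb q m * bb q n := by simp only [bb]; ring

lemma summable_F (hq0 : 0 < q) (hq1 : q < 1) : Summable (F q) := by
  have hb := summable_bb hq0 hq1
  have habs : Summable (fun p : ℕ × ℕ => bb q p.1 * bb q p.2) :=
    hb.mul_of_nonneg hb (fun m => (bb_pos hq0 hq1 m).le) (fun m => (bb_pos hq0 hq1 m).le)
  exact summable_abs_iff.mp
    (Summable.of_nonneg_of_le (fun p => abs_nonneg _) (fun p => abs_F_le hq0 hq1 p) habs)

lemma tsum_F (hq0 : 0 < q) (hq1 : q < 1) :
    ∑' p : ℕ × ℕ, F q p = ∑' n : ℕ, q ^ (2 * n ^ 2) / Q q n := by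
  have hF := summable_F hq0 hq1
  have hFs : Summable (fun x : Σ n : ℕ, Finset.HasAntidiagonal.antidiagonal n => F q (x.2 : ℕ × ℕ)) :=
    Finset.HasAntidiagonal.sigmaAntidiagonalEquivProd.summable_iff.mpr hF
  have heq1 : ∑' p : ℕ × ℕ, F q p = ∑' s : ℕ, ∑ kl ∈ Finset.HasAntidiagonal.antidiagonal s, F q kl := by
    conv_rhs => congr; ext; rw [← Finset.sum_finset_coe, ← tsum_fintype (L := .unconditional _)]
    rw [← Finset.HasAntidiagonal.sigmaAntidiagonalEquivProd.tsum_eq (F q)]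
    exact Summable.tsum_sigma' (fun n => (hasSum_fintype _).summable) hFs
  have hGdef : ∀ s : ℕ, ∑ kl ∈ Finset.HasAntidiagonal.antidiagonal s, F q kl = G q s := by
    intro s
    rw [Finset.Nat.sum_antidiagonal_eq_sum_range_succ_mk, G]
  have hGsum : Summable (G q) := by
    have h := hFs.sigma' (fun n => (hasSum_fintype _).summable)
    have : (fun s => ∑' (c : Finset.HasAntidiagonal.antidiagonal s), F q (c : ℕ × ℕ)) = G q := by
      funext s
      rw [tsum_fintype, ← hGdef s, ← Finset.sum_coe_sort (Finset.HasAntidiagonal.antidiagonal s) (F q)]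
    rwa [this] at h
  have heven : ∀ t : ℕ, G q (2 * t) = q ^ (2 * t ^ 2) / Q q t := by
    intro t
    rw [G_even hq0 hq1 t, mul_one_div]
  have hodd : ∀ t : ℕ, G q (2 * t + 1) = 0 := G_odd hq0 hq1
  have hs_even : Summable (fun t => G q (2 * t)) :=
    hGsum.comp_injective (fun a b hab => by omega)
  have hs_odd : Summable (fun t => G q (2 * t + 1)) :=
    hGsum.comp_injective (fun a b hab => by omega)
  have hsplit := tsum_even_add_odd hs_even hs_odd
  rw [heq1]
  have h1 : ∑' s : ℕ, ∑ kl ∈ Finset.HasAntidiagonal.antidiagonal s, F q kl = ∑' s : ℕ, G q s :=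
    tsum_congr hGdef
  rw [h1, ← hsplit]
  have h2 : ∑' t : ℕ, G q (2 * t + 1) = 0 := by
    rw [tsum_congr hodd]
    exact tsum_zero
  rw [h2, add_zero]
  exact tsum_congr heven

end analytic

end Stmt6

/-- For `0 < q < 1`,
`∑_{m,n ≥ 0} (-1)^(C(n-m,2)) q^((3m²+2mn+3n²)/4) / ((q;q)_m (q;q)_n)
  = ∑_{n ≥ 0} q^(2n²) / (q²;q²)_n`. -/
theorem stmt_6 (q : ℝ) (hq0 : 0 < q) (hq1 : q < 1) :
    (∑' p : ℕ × ℕ,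
      (-1 : ℝ) ^ ((((p.2 : ℤ) - (p.1 : ℤ)) * (((p.2 : ℤ) - (p.1 : ℤ)) - 1)) / 2) *
        q ^ ((3 * (p.1 : ℝ) ^ 2 + 2 * (p.1 : ℝ) * (p.2 : ℝ) + 3 * (p.2 : ℝ) ^ 2) / 4) /
        ((∏ k ∈ Finset.range p.1, (1 - q ^ (k + 1))) *
          (∏ k ∈ Finset.range p.2, (1 - q ^ (k + 1))))) =
    ∑' n : ℕ, q ^ (2 * n ^ 2) / ∏ k ∈ Finset.range n, (1 - q ^ (2 * k + 2)) := by
  have h := Stmt6.tsum_F hq0 hq1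
  simp only [Stmt6.F, Stmt6.P, Stmt6.Q] at h
  exact h
end

section
/- For every real number q with 0 < q < 1, the double series ∑_{m,n ≥ 0} (-1)^{(n-m)(n-m-1)/2} · q^{(3m² + 2mn + 3n²)/4 + m + n} / ((q;q)_m (q;q)_n) equals the single series ∑_{n=0}^{∞} q^{2n² + 2n} / (q²;q²)_n. -/
open Finset

namespace Stmt7

noncomputable def P (q : ℝ) (m : ℕ) : ℝ := ∏ k ∈ Finset.range m, (1 - q ^ (k+1))

noncomputable def B (q : ℝ) : ℕ → ℕ → ℝ
  | 0, 0 => 1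
  | 0, _+1 => 0
  | _+1, 0 => 1
  | n+1, k+1 => B q n (k+1) * q^(k+1) + B q n k

lemma one_sub_pow_ne {q : ℝ} (hq0 : 0 < q) (hq1 : q < 1) (m : ℕ) (hm : m ≠ 0) :
    1 - q ^ m ≠ 0 := by
  have : q ^ m < 1 := pow_lt_one₀ hq0.le hq1 hm
  linarith

lemma P_pos {q : ℝ} (hq0 : 0 < q) (hq1 : q < 1) (m : ℕ) : 0 < P q m := by
  apply Finset.prod_pos
  intro k _
  have : q ^ (k+1) < 1 := pow_lt_one₀ hq0.le hq1 (Nat.succ_ne_zero k)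
  linarith

lemma P_ne {q : ℝ} (hq0 : 0 < q) (hq1 : q < 1) (m : ℕ) : P q m ≠ 0 := (P_pos hq0 hq1 m).ne'

lemma P_succ (q : ℝ) (m : ℕ) : P q (m+1) = P q m * (1 - q ^ (m+1)) := Finset.prod_range_succ _ m

lemma P_zero (q : ℝ) : P q 0 = 1 := rfl

lemma B_zero_right (q : ℝ) (n : ℕ) : B q n 0 = 1 := by cases n <;> rfl

lemma B_eq_zero (q : ℝ) : ∀ n k : ℕ, n < k → B q n k = 0 := by
  intro n
  induction n with
  | zero => intro k hk; match k, hk with | k+1, _ => rfl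
  | succ n ih =>
    intro k hk
    match k, hk with
    | k+1, hk =>
      show B q n (k+1) * q^(k+1) + B q n k = 0
      rw [ih (k+1) (by omega), ih k (by omega)]
      ring

lemma B_formula {q : ℝ} (hq0 : 0 < q) (hq1 : q < 1) :
    ∀ n k : ℕ, k ≤ n → B q n k = P q n / (P q k * P q (n-k)) := by
  intro n
  induction n with
  | zero => intro k hk; interval_cases k; simp [P, B]
  | succ n ih =>
    intro k hk
    match k with
    | 0 =>
      rw [B_zero_right, P_zero, one_mul, Nat.sub_zero, div_self (P_ne hq0 hq1 _)]
    | k+1 =>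
      show B q n (k+1) * q^(k+1) + B q n k = _
      rcases Nat.lt_or_ge k n with h | h
      · rw [ih (k+1) (by omega), ih k (by omega)]
        have e1 : n + 1 - (k+1) = (n - (k+1)) + 1 := by omega
        have e2 : n - k = (n - (k+1)) + 1 := by omega
        rw [e1, e2, P_succ, P_succ, P_succ]
        have h1 : (1 - q ^ (k+1)) ≠ 0 := one_sub_pow_ne hq0 hq1 _ (Nat.succ_ne_zero _)
        have h2 : (1 - q ^ (n - (k+1) + 1)) ≠ 0 := one_sub_pow_ne hq0 hq1 _ (Nat.succ_ne_zero _)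
        have h3 : (1 - q ^ (n + 1)) ≠ 0 := one_sub_pow_ne hq0 hq1 _ (Nat.succ_ne_zero _)
        have hP1 := P_ne hq0 hq1 n
        have hP2 := P_ne hq0 hq1 k
        have hP3 := P_ne hq0 hq1 (n - (k+1))
        have key : q^(k+1) * q^(n - (k+1) + 1) = q^(n+1) := by
          rw [← pow_add]; congr 1; omega
        rw [← key]
        field_simp
        ring
      · have hk' : k = n := by omega
        subst hk'
        rw [B_eq_zero q k (k+1) (by omega), ih k le_rfl, Nat.sub_self, Nat.sub_self, P_zero,
          mul_one, mul_one, div_self (P_ne hq0 hq1 _), div_self (P_ne hq0 hq1 _)]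
        ring

end Stmt7

namespace Stmt7

lemma B_symm {q : ℝ} (hq0 : 0 < q) (hq1 : q < 1) (n k : ℕ) (h : k ≤ n) :
    B q n (n-k) = B q n k := by
  rw [B_formula hq0 hq1 n (n-k) (by omega), B_formula hq0 hq1 n k h]
  have : n - (n-k) = k := by omega
  rw [this, mul_comm]

lemma pascalB {q : ℝ} (hq0 : 0 < q) (hq1 : q < 1) (n k : ℕ) (h : k ≤ n) :
    B q (n+1) (k+1) = B q n (k+1) + q^(n-k) * B q n k := by
  rcases Nat.lt_or_ge k n with h' | h'
  · rw [B_formula hq0 hq1 (n+1) (k+1) (by omega), B_formula hq0 hq1 n (k+1) (by omega),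
      B_formula hq0 hq1 n k (by omega)]
    have e1 : n + 1 - (k+1) = (n - (k+1)) + 1 := by omega
    have e2 : n - k = (n - (k+1)) + 1 := by omega
    rw [e1, e2, P_succ, P_succ, P_succ]
    have h1 : (1 - q ^ (k+1)) ≠ 0 := one_sub_pow_ne hq0 hq1 _ (Nat.succ_ne_zero _)
    have h2 : (1 - q ^ (n - (k+1) + 1)) ≠ 0 := one_sub_pow_ne hq0 hq1 _ (Nat.succ_ne_zero _)
    have h3 : (1 - q ^ (n + 1)) ≠ 0 := one_sub_pow_ne hq0 hq1 _ (Nat.succ_ne_zero _)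
    have hP1 := P_ne hq0 hq1 n
    have hP2 := P_ne hq0 hq1 k
    have hP3 := P_ne hq0 hq1 (n - (k+1))
    have key : q^(n - (k+1) + 1) * q^(k+1) = q^(n+1) := by
      rw [← pow_add]; congr 1; omega
    rw [← key]
    field_simp
    ring
  · have hk' : k = n := by omega
    subst hk'
    rw [B_eq_zero q k (k+1) (by omega), Nat.sub_self, pow_zero,
      B_formula hq0 hq1 (k+1) (k+1) le_rfl, Nat.sub_self, P_zero, mul_one,
      div_self (P_ne hq0 hq1 _), B_formula hq0 hq1 k k le_rfl, Nat.sub_self, P_zero, mul_one,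
      div_self (P_ne hq0 hq1 _)]
    ring

lemma B_mul {q : ℝ} (hq0 : 0 < q) (hq1 : q < 1) (n k : ℕ) (h : k < n) :
    (1 - q^(n-k)) * B q n k = (1 - q^n) * B q (n-1) k := by
  rw [B_formula hq0 hq1 n k (by omega), B_formula hq0 hq1 (n-1) k (by omega)]
  have e1 : n = (n-1) + 1 := by omega
  have e2 : n - k = (n - 1 - k) + 1 := by omega
  have hPn : P q n = P q (n-1) * (1 - q^n) := by
    have := P_succ q (n-1); rw [← e1] at this; exact this
  have hPnk : P q (n-k) = P q (n-1-k) * (1 - q^(n-k)) := by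
    have := P_succ q (n-1-k); rw [← e2] at this; exact this
  rw [hPn, hPnk]
  have h2 : (1 - q ^ (n - k)) ≠ 0 := one_sub_pow_ne hq0 hq1 _ (by omega)
  have h3 : (1 - q ^ n) ≠ 0 := one_sub_pow_ne hq0 hq1 _ (by omega)
  have hP1 := P_ne hq0 hq1 (n-1)
  have hP2 := P_ne hq0 hq1 k
  have hP3 := P_ne hq0 hq1 (n - 1 - k)
  field_simp

end Stmt7

namespace Stmt7

lemma rpow_mul_pow {q : ℝ} (hq0 : 0 < q) (a : ℝ) (m : ℕ) :
    q ^ a * q ^ m = q ^ (a + m) := by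
  rw [← Real.rpow_natCast q m, ← Real.rpow_add hq0]

lemma neg_one_pow_reflect {i m : ℕ} (h : i ≤ m) (hm : Odd m) :
    (-1:ℝ)^(m - i) = -(-1:ℝ)^i := by
  have h2 : m - i + i = m := by omega
  have e1 : (-1:ℝ)^(m-i) * (-1:ℝ)^i = -1 := by
    rw [← pow_add, h2, hm.neg_one_pow]
  have e2 : (-1:ℝ)^i * (-1:ℝ)^i = 1 := by
    rw [← pow_add]; exact Even.neg_one_pow ⟨i, rfl⟩
  calc (-1:ℝ)^(m-i) = (-1:ℝ)^(m-i) * ((-1:ℝ)^i * (-1:ℝ)^i) := by rw [e2, mul_one]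
    _ = ((-1:ℝ)^(m-i) * (-1:ℝ)^i) * (-1:ℝ)^i := by ring
    _ = -(-1:ℝ)^i := by rw [e1]; ring

lemma Wzero {q : ℝ} (hq0 : 0 < q) (hq1 : q < 1) (n : ℕ) :
    ∑ i ∈ Finset.range (2*n), (-1:ℝ)^i * q ^ ((((n:ℝ))-i)^2 + i) * B q (2*n-1) i = 0 := by
  have key : ∑ i ∈ Finset.range (2*n), (-1:ℝ)^i * q ^ ((((n:ℝ))-i)^2 + i) * B q (2*n-1) i
      = - ∑ i ∈ Finset.range (2*n), (-1:ℝ)^i * q ^ ((((n:ℝ))-i)^2 + i) * B q (2*n-1) i := by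
    conv_lhs => rw [← Finset.sum_range_reflect]
    rw [← Finset.sum_neg_distrib]
    apply Finset.sum_congr rfl
    intro i hi
    simp only [Finset.mem_range] at hi
    have hn : 1 ≤ n := by omega
    have h1 : i ≤ 2*n-1 := by omega
    have hcast : ((2*n - 1 - i : ℕ) : ℝ) = 2*(n:ℝ) - 1 - i := by
      push_cast [Nat.cast_sub h1, Nat.cast_sub (by omega : 1 ≤ 2*n)]
      ring
    have hexp : ((n:ℝ) - ((2*n-1-i:ℕ):ℝ))^2 + ((2*n-1-i:ℕ):ℝ)
        = ((n:ℝ)-(i:ℝ))^2 + (i:ℝ) := by rw [hcast]; ring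
    rw [B_symm hq0 hq1 (2*n-1) i h1, neg_one_pow_reflect h1 ⟨n-1, by omega⟩, hexp]
    ring
  linarith

end Stmt7

namespace Stmt7

lemma sum_stepA (q : ℝ) (u : ℕ → ℝ) (m : ℕ) :
    ∑ i ∈ Finset.range (m+2), u i * B q (m+1) i
      = ∑ i ∈ Finset.range (m+1), (u i * q^i + u (i+1)) * B q m i := by
  rw [Finset.sum_range_succ']
  have hB : ∀ i : ℕ, B q (m+1) (i+1) = B q m (i+1) * q^(i+1) + B q m i := fun i => rfl
  simp only [hB, mul_add, Finset.sum_add_distrib, B_zero_right, mul_one]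
  have h1 : ∑ i ∈ Finset.range (m+1), u (i+1) * (B q m (i+1) * q^(i+1)) + u 0
      = ∑ i ∈ Finset.range (m+1), u i * q^i * B q m i := by
    have h := Finset.sum_range_succ' (fun i => u i * q^i * B q m i) (m+1)
    rw [Finset.sum_range_succ, B_eq_zero q m (m+1) (by omega)] at h
    simp only [mul_zero, add_zero, pow_zero, mul_one, B_zero_right] at h
    rw [h]
    congr 1
    apply Finset.sum_congr rfl
    intro i _
    ring
  have h2 : ∀ i ∈ Finset.range (m+1), (u i * q^i + u (i+1)) * B q m i
      = u i * q^i * B q m i + u (i+1) * B q m i := by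
    intro i _; ring
  rw [Finset.sum_congr rfl h2, Finset.sum_add_distrib]
  linarith [h1]

lemma sum_stepB {q : ℝ} (hq0 : 0 < q) (hq1 : q < 1) (u : ℕ → ℝ) (m : ℕ) :
    ∑ i ∈ Finset.range (m+2), u i * B q (m+1) i
      = ∑ i ∈ Finset.range (m+1), (u i + u (i+1) * q^(m-i)) * B q m i := by
  rw [Finset.sum_range_succ']
  have hB : ∀ i ∈ Finset.range (m+1), u (i+1) * B q (m+1) (i+1)
      = u (i+1) * B q m (i+1) + u (i+1) * q^(m-i) * B q m i := by
    intro i hi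
    simp only [Finset.mem_range] at hi
    rw [pascalB hq0 hq1 m i (by omega)]
    ring
  rw [Finset.sum_congr rfl hB, Finset.sum_add_distrib, B_zero_right, mul_one]
  have h1 : ∑ i ∈ Finset.range (m+1), u (i+1) * B q m (i+1) + u 0
      = ∑ i ∈ Finset.range (m+1), u i * B q m i := by
    have h := Finset.sum_range_succ' (fun i => u i * B q m i) (m+1)
    rw [Finset.sum_range_succ, B_eq_zero q m (m+1) (by omega)] at h
    simp only [mul_zero, add_zero, B_zero_right, mul_one] at h
    rw [h]
  have h2 : ∀ i ∈ Finset.range (m+1), (u i + u (i+1) * q^(m-i)) * B q m i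
      = u i * B q m i + u (i+1) * q^(m-i) * B q m i := by
    intro i _; ring
  rw [Finset.sum_congr rfl h2, Finset.sum_add_distrib]
  linarith [h1]

end Stmt7

namespace Stmt7

noncomputable def S (q : ℝ) (n : ℕ) : ℝ :=
  ∑ i ∈ Finset.range (2*n+1), (-1:ℝ)^(n+i) * q ^ (((n:ℝ)-(i:ℝ))^2) * B q (2*n) i

lemma T1_zero {q : ℝ} (hq0 : 0 < q) (hq1 : q < 1) (n : ℕ) :
    ∑ i ∈ Finset.range (2*n+1),
      (-1:ℝ)^(n+i) * q ^ (((n:ℝ)-(i:ℝ))^2 + ((i:ℝ)+1)) * ((1 - q^(2*n-i)) * B q (2*n) i) = 0 := by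
  rw [Finset.sum_range_succ, Nat.sub_self, pow_zero, sub_self, zero_mul, mul_zero, add_zero]
  have hterm : ∀ i ∈ Finset.range (2*n),
      (-1:ℝ)^(n+i) * q ^ (((n:ℝ)-(i:ℝ))^2 + ((i:ℝ)+1)) * ((1 - q^(2*n-i)) * B q (2*n) i)
      = ((1 - q^(2*n)) * ((-1:ℝ)^n * q)) *
          ((-1:ℝ)^i * q ^ (((n:ℝ)-(i:ℝ))^2 + (i:ℝ)) * B q (2*n-1) i) := by
    intro i hi
    simp only [Finset.mem_range] at hi
    rw [B_mul hq0 hq1 (2*n) i (by omega)]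
    rw [show ((n:ℝ)-(i:ℝ))^2 + ((i:ℝ)+1) = (((n:ℝ)-(i:ℝ))^2 + (i:ℝ)) + 1 from by ring,
      Real.rpow_add hq0, Real.rpow_one, pow_add]
    ring
  rw [Finset.sum_congr rfl hterm, ← Finset.mul_sum, Wzero hq0 hq1 n, mul_zero]

lemma T2_eq_T1 {q : ℝ} (hq0 : 0 < q) (hq1 : q < 1) (n : ℕ) :
    ∑ i ∈ Finset.range (2*n+1),
      (-1:ℝ)^(n+i) * q ^ (((n:ℝ)-(i:ℝ))^2 + (2*(n:ℝ)+1-(i:ℝ))) * ((1 - q^i) * B q (2*n) i)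
    = ∑ i ∈ Finset.range (2*n+1),
      (-1:ℝ)^(n+i) * q ^ (((n:ℝ)-(i:ℝ))^2 + ((i:ℝ)+1)) * ((1 - q^(2*n-i)) * B q (2*n) i) := by
  rw [← Finset.sum_range_reflect]
  apply Finset.sum_congr rfl
  intro j hj
  simp only [Finset.mem_range] at hj
  have hj' : j ≤ 2*n := by omega
  have hidx : 2*n+1-1-j = 2*n - j := by omega
  rw [hidx]
  have hc : ((2*n-j:ℕ):ℝ) = 2*(n:ℝ) - j := by push_cast [Nat.cast_sub hj']; ring
  have hsgn : (-1:ℝ)^(n+(2*n-j)) = (-1:ℝ)^(n+j) := by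
    rw [neg_one_pow_eq_pow_mod_two, neg_one_pow_eq_pow_mod_two (n := n+j)]
    congr 1
    omega
  have hexp : ((n:ℝ)-((2*n-j:ℕ):ℝ))^2 + (2*(n:ℝ)+1-((2*n-j:ℕ):ℝ))
      = ((n:ℝ)-(j:ℝ))^2 + ((j:ℝ)+1) := by rw [hc]; ring
  have hfac : 2*n - (2*n - j) = j := by omega
  rw [hsgn, hexp, B_symm hq0 hq1 (2*n) j hj']

lemma S_rec {q : ℝ} (hq0 : 0 < q) (hq1 : q < 1) (n : ℕ) :
    S q (n+1) = (1 - q^(2*n+1)) * S q n := by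
  set u : ℕ → ℝ := fun j => (-1:ℝ)^(n+1+j) * q ^ ((((n:ℝ)+1)-(j:ℝ))^2) with hu
  have e1 : S q (n+1) = ∑ i ∈ Finset.range ((2*n+1)+2), u i * B q ((2*n+1)+1) i := by
    show ∑ i ∈ Finset.range (2*(n+1)+1), (-1:ℝ)^((n+1)+i) * q ^ ((((n+1:ℕ):ℝ)-(i:ℝ))^2) * B q (2*(n+1)) i = _
    rw [show 2*(n+1)+1 = (2*n+1)+2 from by ring]
    apply Finset.sum_congr rfl
    intro i _
    rw [show 2*(n+1) = (2*n+1)+1 from by ring]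
    simp only [hu]
    push_cast
    ring_nf
  have e2 : ∑ i ∈ Finset.range ((2*n+1)+2), u i * B q ((2*n+1)+1) i
      = ∑ i ∈ Finset.range ((2*n)+2), (fun i => u i * q^i + u (i+1)) i * B q ((2*n)+1) i :=
    sum_stepA q u (2*n+1)
  have e3 : ∑ i ∈ Finset.range ((2*n)+2), (fun i => u i * q^i + u (i+1)) i * B q ((2*n)+1) i
      = ∑ i ∈ Finset.range (2*n+1),
          ((fun i => u i * q^i + u (i+1)) i + (fun i => u i * q^i + u (i+1)) (i+1) * q^(2*n-i))
            * B q (2*n) i :=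
    sum_stepB hq0 hq1 _ (2*n)
  rw [e1, e2, e3]
  have key : ∀ i ∈ Finset.range (2*n+1),
      ((fun i => u i * q^i + u (i+1)) i + (fun i => u i * q^i + u (i+1)) (i+1) * q^(2*n-i))
          * B q (2*n) i
      = (1 - q^(2*n+1)) * ((-1:ℝ)^(n+i) * q ^ (((n:ℝ)-(i:ℝ))^2) * B q (2*n) i)
        - (-1:ℝ)^(n+i) * q ^ (((n:ℝ)-(i:ℝ))^2 + ((i:ℝ)+1)) * ((1 - q^(2*n-i)) * B q (2*n) i)
        - (-1:ℝ)^(n+i) * q ^ (((n:ℝ)-(i:ℝ))^2 + (2*(n:ℝ)+1-(i:ℝ))) * ((1 - q^i) * B q (2*n) i) := by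
    intro i hi
    simp only [Finset.mem_range] at hi
    have h : i ≤ 2*n := by omega
    have hcoef : ((u i * q^i + u (i+1)) + (u (i+1) * q^(i+1) + u (i+2)) * q^(2*n-i))
        = (1-q^(2*n+1)) * ((-1:ℝ)^(n+i) * q ^ (((n:ℝ)-(i:ℝ))^2))
          - (-1:ℝ)^(n+i) * q ^ (((n:ℝ)-(i:ℝ))^2 + ((i:ℝ)+1)) * (1 - q^(2*n-i))
          - (-1:ℝ)^(n+i) * q ^ (((n:ℝ)-(i:ℝ))^2 + (2*(n:ℝ)+1-(i:ℝ))) * (1 - q^i) := by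
      have hc : ((2*n-i:ℕ):ℝ) = 2*(n:ℝ) - i := by
        push_cast [Nat.cast_sub h]; ring
      simp only [hu]
      push_cast
      rw [← Real.rpow_natCast q i, ← Real.rpow_natCast q (i+1), ← Real.rpow_natCast q (2*n-i),
        ← Real.rpow_natCast q (2*n+1), hc]
      push_cast
      simp only [pow_add, pow_succ]
      ring_nf
      simp only [← Real.rpow_add hq0]
      ring_nf
    calc ((fun i => u i * q^i + u (i+1)) i + (fun i => u i * q^i + u (i+1)) (i+1) * q^(2*n-i))
          * B q (2*n) i
        = ((u i * q^i + u (i+1)) + (u (i+1) * q^(i+1) + u (i+2)) * q^(2*n-i)) * B q (2*n) i := by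
          ring
      _ = _ := by rw [hcoef]; ring
  rw [Finset.sum_congr rfl key]
  simp only [Finset.sum_sub_distrib]
  rw [T2_eq_T1 hq0 hq1 n, T1_zero hq0 hq1 n, ← Finset.mul_sum]
  show (1 - q^(2*n+1)) * S q n - 0 - 0 = _
  ring

lemma S_formula {q : ℝ} (hq0 : 0 < q) (hq1 : q < 1) (n : ℕ) :
    S q n = ∏ k ∈ Finset.range n, (1 - q^(2*k+1)) := by
  induction n with
  | zero => simp [S, B]
  | succ n ih =>
    rw [S_rec hq0 hq1 n, ih, Finset.prod_range_succ]
    ring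

end Stmt7

namespace Stmt7

lemma zpow_neg_one_sub (N i : ℕ) : (-1:ℝ) ^ ((N:ℤ) - (i:ℤ)) = (-1:ℝ)^(N+i) := by
  rw [zpow_sub₀ (by norm_num : (-1:ℝ) ≠ 0), zpow_natCast, zpow_natCast, pow_add,
    div_eq_mul_inv]
  congr 1
  rcases Nat.even_or_odd i with h | h
  · rw [h.neg_one_pow]; norm_num
  · rw [h.neg_one_pow]; norm_num

lemma sign_even (e : ℤ) : (-1:ℝ) ^ ((2*e) * (2*e - 1) / 2) = (-1:ℝ) ^ e := by
  have h1 : (2*e) * (2*e - 1) / 2 = e * (2*e-1) := by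
    rw [mul_assoc, Int.mul_ediv_cancel_left _ (by norm_num : (2:ℤ) ≠ 0)]
  rw [h1, zpow_mul]
  rcases Int.even_or_odd e with h | h
  · rw [h.neg_one_zpow, one_zpow]
  · rw [h.neg_one_zpow]
    exact Odd.neg_one_zpow ⟨e-1, by ring⟩

lemma sign_flip {d : ℤ} (hd : Odd d) :
    (-1:ℝ) ^ ((-d) * ((-d) - 1) / 2) = -(-1:ℝ) ^ (d * (d-1) / 2) := by
  obtain ⟨k, hk⟩ := Int.even_mul_succ_self (d-1)
  have hk' : d * (d - 1) = 2 * k := by linarith [hk]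
  have h1 : d * (d-1) / 2 = k := by rw [hk', Int.mul_ediv_cancel_left _ (by norm_num : (2:ℤ) ≠ 0)]
  have h2 : (-d) * ((-d) - 1) / 2 = k + d := by
    have : (-d) * ((-d) - 1) = 2 * (k + d) := by linarith [hk]
    rw [this, Int.mul_ediv_cancel_left _ (by norm_num : (2:ℤ) ≠ 0)]
  rw [h1, h2, zpow_add₀ (by norm_num : (-1:ℝ) ≠ 0), hd.neg_one_zpow]
  ring

end Stmt7

namespace Stmt7

noncomputable def a (q : ℝ) (p : ℕ × ℕ) : ℝ :=
  (-1 : ℝ) ^ ((((p.2 : ℤ) - (p.1 : ℤ)) * (((p.2 : ℤ) - (p.1 : ℤ)) - 1)) / 2) *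
    q ^ ((3 * (p.1 : ℝ) ^ 2 + 2 * (p.1 : ℝ) * (p.2 : ℝ) + 3 * (p.2 : ℝ) ^ 2) / 4
          + (p.1 : ℝ) + (p.2 : ℝ)) /
    ((∏ k ∈ Finset.range p.1, (1 - q ^ (k + 1))) *
      (∏ k ∈ Finset.range p.2, (1 - q ^ (k + 1))))

lemma a_eq (q : ℝ) (p : ℕ × ℕ) :
    a q p = (-1 : ℝ) ^ ((((p.2 : ℤ) - (p.1 : ℤ)) * (((p.2 : ℤ) - (p.1 : ℤ)) - 1)) / 2) *
      q ^ ((3 * (p.1 : ℝ) ^ 2 + 2 * (p.1 : ℝ) * (p.2 : ℝ) + 3 * (p.2 : ℝ) ^ 2) / 4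
            + (p.1 : ℝ) + (p.2 : ℝ)) / (P q p.1 * P q p.2) := rfl

lemma P_even (q : ℝ) (N : ℕ) :
    P q (2*N) = (∏ k ∈ Finset.range N, (1 - q^(2*k+1))) * ∏ k ∈ Finset.range N, (1 - q^(2*k+2)) := by
  induction N with
  | zero => simp [P]
  | succ N ih =>
    have h2 : 2*(N+1) = (2*N+1)+1 := by ring
    rw [h2, P_succ, show 2*N+1 = (2*N)+1 from rfl, P_succ, ih,
      Finset.prod_range_succ, Finset.prod_range_succ,
      show 2*N+1+1 = 2*N+2 from by omega]
    ring

lemma g_odd {q : ℝ} (hq0 : 0 < q) (hq1 : q < 1) (N : ℕ) :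
    ∑ i ∈ Finset.range (2*N+1+1), a q (i, 2*N+1-i) = 0 := by
  have key : ∑ i ∈ Finset.range (2*N+1+1), a q (i, 2*N+1-i)
      = - ∑ i ∈ Finset.range (2*N+1+1), a q (i, 2*N+1-i) := by
    conv_lhs => rw [← Finset.sum_range_reflect]
    rw [← Finset.sum_neg_distrib]
    apply Finset.sum_congr rfl
    intro i hi
    simp only [Finset.mem_range] at hi
    have h1 : i ≤ 2*N+1 := by omega
    have hidx : 2*N+1+1-1-i = 2*N+1-i := by omega
    have hidx2 : 2*N+1-(2*N+1-i) = i := by omega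
    rw [hidx, hidx2, a_eq, a_eq]
    have hcast : ((2*N+1-i : ℕ) : ℝ) = 2*(N:ℝ)+1-(i:ℝ) := by
      push_cast [Nat.cast_sub h1]; ring
    have hcastz : ((2*N+1-i : ℕ) : ℤ) = 2*(N:ℤ)+1-(i:ℤ) := by
      push_cast [Nat.cast_sub h1]; ring
    simp only [Prod.fst, Prod.snd, hcast, hcastz]
    set d : ℤ := (2*(N:ℤ)+1-(i:ℤ)) - (i:ℤ) with hd
    have hdodd : Odd d := ⟨(N:ℤ)-i, by rw [hd]; ring⟩
    have hsg : ((i:ℤ) - (2*(N:ℤ)+1-(i:ℤ))) = -d := by rw [hd]; ring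
    rw [hsg]
    rw [sign_flip hdodd]
    have hexp : (3 * ((2*(N:ℝ)+1-(i:ℝ))) ^ 2 + 2 * ((2*(N:ℝ)+1-(i:ℝ))) * (i:ℝ) + 3 * (i:ℝ) ^ 2) / 4
          + ((2*(N:ℝ)+1-(i:ℝ))) + (i:ℝ)
        = (3 * (i:ℝ) ^ 2 + 2 * (i:ℝ) * ((2*(N:ℝ)+1-(i:ℝ))) + 3 * ((2*(N:ℝ)+1-(i:ℝ))) ^ 2) / 4
          + (i:ℝ) + ((2*(N:ℝ)+1-(i:ℝ))) := by ring
    rw [hexp]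
    ring
  linarith

end Stmt7

namespace Stmt7

lemma g_even {q : ℝ} (hq0 : 0 < q) (hq1 : q < 1) (N : ℕ) :
    ∑ i ∈ Finset.range (2*N+1), a q (i, 2*N-i)
      = q ^ (2 * N ^ 2 + 2 * N) / ∏ k ∈ Finset.range N, (1 - q ^ (2 * k + 2)) := by
  have key : ∀ i ∈ Finset.range (2*N+1),
      a q (i, 2*N-i)
        = (q ^ ((2*(N:ℝ)^2 + 2*(N:ℝ))) / P q (2*N)) *
            ((-1:ℝ)^(N+i) * q ^ (((N:ℝ)-(i:ℝ))^2) * B q (2*N) i) := by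
    intro i hi
    simp only [Finset.mem_range] at hi
    have h1 : i ≤ 2*N := by omega
    rw [a_eq]
    have hcast : ((2*N-i : ℕ) : ℝ) = 2*(N:ℝ)-(i:ℝ) := by
      push_cast [Nat.cast_sub h1]; ring
    have hcastz : ((2*N-i : ℕ) : ℤ) = 2*(N:ℤ)-(i:ℤ) := by
      push_cast [Nat.cast_sub h1]; ring
    simp only [Prod.fst, Prod.snd, hcast, hcastz]
    have hsg : (2*(N:ℤ)-(i:ℤ)) - (i:ℤ) = 2*((N:ℤ)-(i:ℤ)) := by ring
    rw [hsg, sign_even ((N:ℤ)-(i:ℤ)), zpow_neg_one_sub N i]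
    have hexp : (3 * (i:ℝ) ^ 2 + 2 * (i:ℝ) * (2*(N:ℝ)-(i:ℝ)) + 3 * (2*(N:ℝ)-(i:ℝ)) ^ 2) / 4
          + (i:ℝ) + (2*(N:ℝ)-(i:ℝ))
        = (2*(N:ℝ)^2 + 2*(N:ℝ)) + ((N:ℝ)-(i:ℝ))^2 := by ring
    rw [hexp, Real.rpow_add hq0, B_formula hq0 hq1 (2*N) i h1]
    have hPi := P_ne hq0 hq1 i
    have hPj := P_ne hq0 hq1 (2*N-i)
    have hPn := P_ne hq0 hq1 (2*N)
    field_simp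
  rw [Finset.sum_congr rfl key, ← Finset.mul_sum]
  have hS : ∑ i ∈ Finset.range (2*N+1), ((-1:ℝ)^(N+i) * q ^ (((N:ℝ)-(i:ℝ))^2) * B q (2*N) i)
      = S q N := rfl
  rw [hS, S_formula hq0 hq1 N, P_even q N]
  have hrp : q ^ ((2*(N:ℝ)^2 + 2*(N:ℝ))) = q ^ (2 * N ^ 2 + 2 * N) := by
    rw [← Real.rpow_natCast q (2*N^2+2*N)]
    congr 1
    push_cast
    ring
  rw [hrp]
  have h1 : (∏ k ∈ Finset.range N, (1 - q^(2*k+1))) ≠ 0 := by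
    apply Finset.prod_ne_zero_iff.mpr
    intro k _
    exact one_sub_pow_ne hq0 hq1 _ (by omega)
  have h2 : (∏ k ∈ Finset.range N, (1 - q^(2*k+2))) ≠ 0 := by
    apply Finset.prod_ne_zero_iff.mpr
    intro k _
    exact one_sub_pow_ne hq0 hq1 _ (by omega)
  field_simp

end Stmt7

namespace Stmt7

lemma P_ge {q : ℝ} (hq0 : 0 < q) (hq1 : q < 1) (m : ℕ) : (1-q)^m ≤ P q m := by
  unfold P
  rw [show ((1:ℝ)-q)^m = ∏ _k ∈ Finset.range m, (1-q) from by
    rw [Finset.prod_const, Finset.card_range]]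
  apply Finset.prod_le_prod
  · intro k _; linarith
  · intro k _
    have : q ^ (k+1) ≤ q := by
      calc q ^ (k+1) ≤ q^1 := pow_le_pow_of_le_one hq0.le hq1.le (by omega)
        _ = q := pow_one q
    linarith

noncomputable def f (q : ℝ) (m : ℕ) : ℝ :=
  q ^ (((3:ℝ)/4)*(m:ℝ)^2 + (m:ℝ)) * ((1-q)⁻¹)^m

lemma f_pos {q : ℝ} (hq0 : 0 < q) (hq1 : q < 1) (m : ℕ) : 0 < f q m := by
  apply mul_pos (Real.rpow_pos_of_pos hq0 _)
  apply pow_pos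
  rw [inv_pos]; linarith

lemma summable_f {q : ℝ} (hq0 : 0 < q) (hq1 : q < 1) : Summable (f q) := by
  apply summable_of_ratio_norm_eventually_le (r := 1/2) (by norm_num)
  have htend : Filter.Tendsto (fun m : ℕ => q ^ m) Filter.atTop (nhds 0) :=
    tendsto_pow_atTop_nhds_zero_of_lt_one hq0.le hq1
  have hev : ∀ᶠ m : ℕ in Filter.atTop, q ^ m < (1-q)/2 :=
    htend.eventually (gt_mem_nhds (by linarith : (0:ℝ) < (1-q)/2))
  filter_upwards [hev] with m hm
  have hfp := f_pos hq0 hq1 m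
  have hfp1 := f_pos hq0 hq1 (m+1)
  rw [Real.norm_of_nonneg hfp1.le, Real.norm_of_nonneg hfp.le]
  have hstep : f q (m+1) = f q m * (q ^ (((3:ℝ)/2)*(m:ℝ) + 7/4) * (1-q)⁻¹) := by
    have he : ((3:ℝ)/4)*((m:ℝ)+1)^2 + ((m:ℝ)+1)
        = (((3:ℝ)/4)*(m:ℝ)^2 + (m:ℝ)) + (((3:ℝ)/2)*(m:ℝ) + 7/4) := by ring
    unfold f
    push_cast
    rw [he, Real.rpow_add hq0, pow_succ]
    ring
  rw [hstep]
  have h2 : q ^ (((3:ℝ)/2)*(m:ℝ) + 7/4) ≤ q ^ (m:ℝ) :=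
    Real.rpow_le_rpow_of_exponent_ge hq0 hq1.le (by push_cast; nlinarith [Nat.cast_nonneg (α := ℝ) m])
  rw [Real.rpow_natCast] at h2
  have h3 : q ^ (((3:ℝ)/2)*(m:ℝ) + 7/4) * (1-q)⁻¹ ≤ 1/2 := by
    rw [inv_eq_one_div, mul_comm, div_mul_eq_mul_div, div_le_div_iff₀ (by linarith) (by norm_num)]
    nlinarith [hm, h2]
  calc f q m * (q ^ (((3:ℝ)/2)*(m:ℝ) + 7/4) * (1-q)⁻¹) ≤ f q m * (1/2) :=
        mul_le_mul_of_nonneg_left h3 hfp.le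
    _ = 1/2 * f q m := by ring

lemma abs_a_le {q : ℝ} (hq0 : 0 < q) (hq1 : q < 1) (p : ℕ × ℕ) :
    |a q p| ≤ f q p.1 * f q p.2 := by
  obtain ⟨m, n⟩ := p
  show |a q (m, n)| ≤ f q m * f q n
  have hPm := P_pos hq0 hq1 m
  have hPn := P_pos hq0 hq1 n
  have hE : (0:ℝ) < q ^ ((3 * (m : ℝ) ^ 2 + 2 * (m : ℝ) * (n : ℝ) + 3 * (n : ℝ) ^ 2) / 4
      + (m : ℝ) + (n : ℝ)) := Real.rpow_pos_of_pos hq0 _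
  have hsgn : ∀ z : ℤ, |(-1:ℝ) ^ z| = 1 := by
    intro z
    rcases Int.even_or_odd z with h | h
    · rw [h.neg_one_zpow, abs_one]
    · rw [h.neg_one_zpow, abs_neg, abs_one]
  have haeq : a q (m, n) = (-1 : ℝ) ^ ((((n : ℤ) - (m : ℤ)) * (((n : ℤ) - (m : ℤ)) - 1)) / 2) *
      q ^ ((3 * (m : ℝ) ^ 2 + 2 * (m : ℝ) * (n : ℝ) + 3 * (n : ℝ) ^ 2) / 4
            + (m : ℝ) + (n : ℝ)) / (P q m * P q n) := rfl
  have habs : |a q (m, n)| = q ^ ((3 * (m : ℝ) ^ 2 + 2 * (m : ℝ) * (n : ℝ) + 3 * (n : ℝ) ^ 2) / 4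
      + (m : ℝ) + (n : ℝ)) / (P q m * P q n) := by
    rw [haeq, abs_div, abs_mul, hsgn, one_mul, abs_of_pos hE, abs_of_pos (by positivity)]
  rw [habs]
  have hEle : q ^ ((3 * (m : ℝ) ^ 2 + 2 * (m : ℝ) * (n : ℝ) + 3 * (n : ℝ) ^ 2) / 4
        + (m : ℝ) + (n : ℝ))
      ≤ q ^ (((3:ℝ)/4)*(m:ℝ)^2 + (m:ℝ)) * q ^ (((3:ℝ)/4)*(n:ℝ)^2 + (n:ℝ)) := by
    rw [← Real.rpow_add hq0]
    apply Real.rpow_le_rpow_of_exponent_ge hq0 hq1.le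
    nlinarith [Nat.cast_nonneg (α := ℝ) m, Nat.cast_nonneg (α := ℝ) n]
  have hinv : (P q m * P q n)⁻¹ ≤ ((1-q)⁻¹)^m * ((1-q)⁻¹)^n := by
    rw [mul_inv]
    have h1 : (P q m)⁻¹ ≤ ((1-q)⁻¹)^m := by
      rw [inv_pow]
      exact inv_anti₀ (pow_pos (by linarith : (0:ℝ) < 1-q) m) (P_ge hq0 hq1 m)
    have h2 : (P q n)⁻¹ ≤ ((1-q)⁻¹)^n := by
      rw [inv_pow]
      exact inv_anti₀ (pow_pos (by linarith : (0:ℝ) < 1-q) n) (P_ge hq0 hq1 n)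
    exact mul_le_mul h1 h2 (inv_nonneg.mpr hPn.le)
      (pow_nonneg (inv_nonneg.mpr (by linarith : (0:ℝ) ≤ 1-q)) m)
  calc q ^ ((3 * (m : ℝ) ^ 2 + 2 * (m : ℝ) * (n : ℝ) + 3 * (n : ℝ) ^ 2) / 4
        + (m : ℝ) + (n : ℝ)) / (P q m * P q n)
      = q ^ ((3 * (m : ℝ) ^ 2 + 2 * (m : ℝ) * (n : ℝ) + 3 * (n : ℝ) ^ 2) / 4
        + (m : ℝ) + (n : ℝ)) * (P q m * P q n)⁻¹ := div_eq_mul_inv _ _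
    _ ≤ (q ^ (((3:ℝ)/4)*(m:ℝ)^2 + (m:ℝ)) * q ^ (((3:ℝ)/4)*(n:ℝ)^2 + (n:ℝ)))
          * (((1-q)⁻¹)^m * ((1-q)⁻¹)^n) := by
        apply mul_le_mul hEle hinv (by positivity) (by positivity)
    _ = f q m * f q n := by unfold f; ring

lemma summable_a {q : ℝ} (hq0 : 0 < q) (hq1 : q < 1) : Summable (a q) := by
  apply Summable.of_abs
  apply Summable.of_nonneg_of_le (fun p => abs_nonneg _) (abs_a_le hq0 hq1)
  exact (summable_f hq0 hq1).mul_of_nonneg (summable_f hq0 hq1)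
    (fun m => (f_pos hq0 hq1 m).le) (fun n => (f_pos hq0 hq1 n).le)

end Stmt7

namespace Stmt7

def fiberEquiv (s : ℕ) : Fin (s+1) ≃ {p : ℕ × ℕ // p.1 + p.2 = s} where
  toFun i := ⟨(i, s - i), by have := i.isLt; simp; omega⟩
  invFun p := ⟨p.1.1, by have := p.2; omega⟩
  left_inv i := by ext; simp
  right_inv p := by
    apply Subtype.ext
    have h := p.2
    apply Prod.ext
    · rfl
    · simp; omega

noncomputable def g (q : ℝ) (s : ℕ) : ℝ := ∑ i ∈ Finset.range (s+1), a q (i, s - i)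

lemma fiber_tsum (q : ℝ) (s : ℕ) :
    ∑' (c : {p : ℕ × ℕ // p.1 + p.2 = s}), a q c.val = g q s := by
  rw [← (fiberEquiv s).tsum_eq (fun c => a q c.val), tsum_fintype]
  show ∑ b : Fin (s+1), a q (↑b, s - ↑b) = _
  rw [Fin.sum_univ_eq_sum_range (fun i => a q (i, s - i)) (s+1)]
  rfl

lemma tsum_a_eq {q : ℝ} (hq0 : 0 < q) (hq1 : q < 1) :
    ∑' p : ℕ × ℕ, a q p = ∑' s : ℕ, g q s := by
  have hsum := summable_a hq0 hq1
  set σ := Equiv.sigmaFiberEquiv (fun p : ℕ × ℕ => p.1 + p.2) with hσ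
  have h1 : ∑' p : ℕ × ℕ, a q p = ∑' x : (Σ s : ℕ, {p : ℕ × ℕ // p.1 + p.2 = s}), a q (σ x) :=
    (σ.tsum_eq (a q)).symm
  have hsumσ : Summable (fun x : (Σ s : ℕ, {p : ℕ × ℕ // p.1 + p.2 = s}) => a q (σ x)) :=
    σ.summable_iff.mpr hsum
  haveI : ∀ s : ℕ, Finite {p : ℕ × ℕ // p.1 + p.2 = s} := fun s => Finite.intro (fiberEquiv s).symm
  have h2 : ∑' x : (Σ s : ℕ, {p : ℕ × ℕ // p.1 + p.2 = s}), a q (σ x)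
      = ∑' (s : ℕ) (c : {p : ℕ × ℕ // p.1 + p.2 = s}), a q c.val := by
    apply Summable.tsum_sigma'
    · intro s; exact Summable.of_finite
    · exact hsumσ
  rw [h1, h2]
  exact tsum_congr (fun s => fiber_tsum q s)

lemma summable_g {q : ℝ} (hq0 : 0 < q) (hq1 : q < 1) : Summable (g q) := by
  have hsum := summable_a hq0 hq1
  set σ := Equiv.sigmaFiberEquiv (fun p : ℕ × ℕ => p.1 + p.2) with hσ
  have hsumσ : Summable (fun x : (Σ s : ℕ, {p : ℕ × ℕ // p.1 + p.2 = s}) => a q (σ x)) :=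
    σ.summable_iff.mpr hsum
  haveI : ∀ s : ℕ, Finite {p : ℕ × ℕ // p.1 + p.2 = s} := fun s => Finite.intro (fiberEquiv s).symm
  have := hsumσ.sigma' (fun s => Summable.of_finite)
  exact this.congr (fun s => fiber_tsum q s)

end Stmt7

/-- For `0 < q < 1`,
`∑_{m,n ≥ 0} (-1)^(C(n-m,2)) q^((3m²+2mn+3n²)/4 + m + n) / ((q;q)_m (q;q)_n)
  = ∑_{n ≥ 0} q^(2n²+2n) / (q²;q²)_n`. -/
theorem stmt_7 (q : ℝ) (hq0 : 0 < q) (hq1 : q < 1) :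
    (∑' p : ℕ × ℕ,
      (-1 : ℝ) ^ ((((p.2 : ℤ) - (p.1 : ℤ)) * (((p.2 : ℤ) - (p.1 : ℤ)) - 1)) / 2) *
        q ^ ((3 * (p.1 : ℝ) ^ 2 + 2 * (p.1 : ℝ) * (p.2 : ℝ) + 3 * (p.2 : ℝ) ^ 2) / 4
              + (p.1 : ℝ) + (p.2 : ℝ)) /
        ((∏ k ∈ Finset.range p.1, (1 - q ^ (k + 1))) *
          (∏ k ∈ Finset.range p.2, (1 - q ^ (k + 1))))) =
    ∑' n : ℕ, q ^ (2 * n ^ 2 + 2 * n) / ∏ k ∈ Finset.range n, (1 - q ^ (2 * k + 2)) := by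
  have h0 : (∑' p : ℕ × ℕ,
      (-1 : ℝ) ^ ((((p.2 : ℤ) - (p.1 : ℤ)) * (((p.2 : ℤ) - (p.1 : ℤ)) - 1)) / 2) *
        q ^ ((3 * (p.1 : ℝ) ^ 2 + 2 * (p.1 : ℝ) * (p.2 : ℝ) + 3 * (p.2 : ℝ) ^ 2) / 4
              + (p.1 : ℝ) + (p.2 : ℝ)) /
        ((∏ k ∈ Finset.range p.1, (1 - q ^ (k + 1))) *
          (∏ k ∈ Finset.range p.2, (1 - q ^ (k + 1))))) = ∑' p : ℕ × ℕ, Stmt7.a q p := rfl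
  rw [h0, Stmt7.tsum_a_eq hq0 hq1]
  have hg := Stmt7.summable_g hq0 hq1
  have he : Summable (fun N => Stmt7.g q (2*N)) :=
    hg.comp_injective (fun x y h => by omega)
  have ho : Summable (fun N => Stmt7.g q (2*N+1)) :=
    hg.comp_injective (fun x y h => by omega)
  rw [← tsum_even_add_odd he ho]
  have hgo : ∀ N : ℕ, Stmt7.g q (2*N+1) = 0 := fun N => Stmt7.g_odd hq0 hq1 N
  have hge : ∀ N : ℕ, Stmt7.g q (2*N)
      = q ^ (2 * N ^ 2 + 2 * N) / ∏ k ∈ Finset.range N, (1 - q ^ (2 * k + 2)) :=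
    fun N => Stmt7.g_even hq0 hq1 N
  have hodd : ∑' N : ℕ, Stmt7.g q (2*N+1) = 0 := by
    rw [tsum_congr hgo, tsum_zero]
  have heven : ∑' N : ℕ, Stmt7.g q (2*N)
      = ∑' n : ℕ, q ^ (2 * n ^ 2 + 2 * n) / ∏ k ∈ Finset.range n, (1 - q ^ (2 * k + 2)) :=
    tsum_congr hge
  rw [hodd, heven, add_zero]
end

section
/- For every real number q with 0 < q < 1, the double series ∑_{m,n ≥ 0} (-1)^m · q^{(m+n)²/4} / ((q²;q²)_m (q²;q²)_n) equals the single series ∑_{n=0}^{∞} q^{n²} / (q⁴;q⁴)_n. -/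
open Finset

noncomputable def qA (Q : ℝ) (m : ℕ) : ℝ := (∏ k ∈ range m, (1 - Q ^ (k + 1)))⁻¹
noncomputable def qB (Q : ℝ) (s : ℕ) : ℝ :=
  ∑ m ∈ range (s + 1), (-1 : ℝ) ^ m * qA Q m * qA Q (s - m)
noncomputable def qD (Q : ℝ) (s : ℕ) : ℝ :=
  ∑ m ∈ range (s + 1), (-1 : ℝ) ^ m * Q ^ m * qA Q m * qA Q (s - m)

section
variable {Q : ℝ} (hQ0 : 0 < Q) (hQ1 : Q < 1)

include hQ0 hQ1 in
lemma qfac_lt_one (k : ℕ) : Q ^ (k + 1) < 1 := pow_lt_one₀ hQ0.le hQ1 (Nat.succ_ne_zero k)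

include hQ0 hQ1 in
lemma qP_pos (m : ℕ) : 0 < ∏ k ∈ range m, (1 - Q ^ (k + 1)) :=
  Finset.prod_pos fun k _ => by have := qfac_lt_one hQ0 hQ1 k; linarith

lemma qA_zero : qA Q 0 = 1 := by simp [qA]

include hQ0 hQ1 in
lemma qA_rec (m : ℕ) : qA Q m = (1 - Q ^ (m + 1)) * qA Q (m + 1) := by
  unfold qA
  rw [prod_range_succ, mul_inv]
  have h : (1 - Q ^ (m + 1)) ≠ 0 := by have := qfac_lt_one hQ0 hQ1 m; linarith
  have hP : (∏ k ∈ range m, (1 - Q ^ (k + 1))) ≠ 0 := (qP_pos hQ0 hQ1 m).ne'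
  field_simp

-- L1 : qB (s+1) = qD (s+1) - qB s
include hQ0 hQ1 in
lemma qL1 (s : ℕ) : qB Q (s + 1) = qD Q (s + 1) - qB Q s := by
  have key : qB Q (s + 1) - qD Q (s + 1) = -qB Q s := by
    unfold qB qD
    rw [← Finset.sum_sub_distrib, Finset.sum_range_succ', ← Finset.sum_neg_distrib]
    have h0 : (-1 : ℝ) ^ 0 * qA Q 0 * qA Q (s + 1 - 0)
        - (-1 : ℝ) ^ 0 * Q ^ 0 * qA Q 0 * qA Q (s + 1 - 0) = 0 := by ring
    rw [h0, add_zero]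
    apply Finset.sum_congr rfl
    intro i hi
    have hs : s + 1 - (i + 1) = s - i := by omega
    rw [hs]
    have := qA_rec hQ0 hQ1 i
    have hpow : (-1 : ℝ) ^ (i + 1) = -(-1 : ℝ) ^ i := by rw [pow_succ]; ring
    rw [hpow]
    linear_combination ((-1 : ℝ) ^ i * qA Q (s - i)) * this
  linarith

-- L4 : qD (s+1) = qD s + Q^(s+1) * qB (s+1)
include hQ0 hQ1 in
lemma qL4 (s : ℕ) : qD Q (s + 1) = qD Q s + Q ^ (s + 1) * qB Q (s + 1) := by
  have e1 : qD Q (s + 1)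
      = (∑ m ∈ range (s + 1), (-1 : ℝ) ^ m * Q ^ m * qA Q m * qA Q (s + 1 - m))
        + (-1 : ℝ) ^ (s + 1) * Q ^ (s + 1) * qA Q (s + 1) * qA Q 0 := by
    unfold qD
    rw [Finset.sum_range_succ]
    simp
  have e2 : qB Q (s + 1)
      = (∑ m ∈ range (s + 1), (-1 : ℝ) ^ m * qA Q m * qA Q (s + 1 - m))
        + (-1 : ℝ) ^ (s + 1) * qA Q (s + 1) * qA Q 0 := by
    unfold qB
    rw [Finset.sum_range_succ]
    simp
  have e3 : ∀ m ∈ range (s + 1),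
      (-1 : ℝ) ^ m * Q ^ m * qA Q m * qA Q (s + 1 - m)
        = (-1 : ℝ) ^ m * Q ^ m * qA Q m * qA Q (s - m)
          + Q ^ (s + 1) * ((-1 : ℝ) ^ m * qA Q m * qA Q (s + 1 - m)) := by
    intro m hm
    have hm' : m ≤ s := by simpa using Nat.lt_succ_iff.mp (mem_range.mp hm)
    have h1 : s + 1 - m = (s - m) + 1 := by omega
    have h2 := qA_rec hQ0 hQ1 (s - m)
    have h3 : Q ^ m * Q ^ (s + 1 - m) = Q ^ (s + 1) := by
      rw [← pow_add]; congr 1; omega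
    rw [h1] at h3 ⊢
    linear_combination (-(-1 : ℝ) ^ m * Q ^ m * qA Q m) * h2 + ((-1 : ℝ) ^ m * qA Q m * qA Q (s - m + 1)) * h3
  rw [e1, e2, Finset.sum_congr rfl e3, Finset.sum_add_distrib, ← Finset.mul_sum]
  unfold qD
  ring

end

section
variable {Q : ℝ} (hQ0 : 0 < Q) (hQ1 : Q < 1)

lemma qB_odd (t : ℕ) : qB Q (2 * t + 1) = 0 := by
  have key : qB Q (2 * t + 1) = -qB Q (2 * t + 1) := by
    conv_lhs => rw [qB, ← Finset.sum_range_reflect]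
    rw [qB, ← Finset.sum_neg_distrib]
    apply Finset.sum_congr rfl
    intro j hj
    have hj' : j ≤ 2 * t + 1 := by simpa [Nat.lt_succ_iff] using hj
    have h1 : 2 * t + 1 + 1 - 1 - j = 2 * t + 1 - j := by omega
    have h2 : 2 * t + 1 - (2 * t + 1 - j) = j := Nat.sub_sub_self hj'
    rw [h1, h2]
    rcases Nat.even_or_odd j with he | ho
    · have hodd : Odd (2 * t + 1 - j) := by
        rcases he with ⟨a, rfl⟩; exact ⟨t - a, by omega⟩
      rw [he.neg_one_pow, hodd.neg_one_pow]; ring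
    · have hev : Even (2 * t + 1 - j) := by
        rcases ho with ⟨a, rfl⟩; exact ⟨t - a, by omega⟩
      rw [ho.neg_one_pow, hev.neg_one_pow]; ring
  linarith

include hQ0 hQ1 in
lemma qB_even (t : ℕ) : qB Q (2 * t) = (∏ k ∈ range t, (1 - Q ^ (2 * k + 2)))⁻¹ := by
  induction t with
  | zero => simp [qB, qA]
  | succ t ih =>
      have h1 : qB Q (2 * t + 1 + 1) = qD Q (2 * t + 1 + 1) - qB Q (2 * t + 1) := qL1 hQ0 hQ1 _
      have h2 : qD Q (2 * t + 1 + 1) = qD Q (2 * t + 1) + Q ^ (2 * t + 1 + 1) * qB Q (2 * t + 1 + 1) :=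
        qL4 hQ0 hQ1 _
      have h3 : qB Q (2 * t + 1) = qD Q (2 * t + 1) - qB Q (2 * t) := qL1 hQ0 hQ1 _
      have h4 : qB Q (2 * t + 1) = 0 := qB_odd t
      have h5 : (1 - Q ^ (2 * t + 2)) * qB Q (2 * (t + 1)) = qB Q (2 * t) := by
        have e : 2 * (t + 1) = 2 * t + 1 + 1 := by ring
        rw [e]
        linear_combination h1 + h2 - h3
      rw [prod_range_succ, mul_inv, ← ih, ← h5]
      have hne : (1 - Q ^ (2 * t + 2)) ≠ 0 := by
        have : Q ^ (2 * t + 1 + 1) < 1 := qfac_lt_one hQ0 hQ1 _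
        have e : 2 * t + 2 = 2 * t + 1 + 1 := by ring
        rw [e]; linarith
      field_simp

end

lemma weier (x : ℕ → ℝ) (h0 : ∀ k, 0 ≤ x k) (h1 : ∀ k, x k ≤ 1) (s : Finset ℕ) :
    1 - ∑ k ∈ s, x k ≤ ∏ k ∈ s, (1 - x k) := by
  induction s using Finset.cons_induction with
  | empty => simp
  | cons a s ha ih =>
    rw [Finset.prod_cons, Finset.sum_cons]
    have hs : 0 ≤ ∑ k ∈ s, x k := Finset.sum_nonneg fun k _ => h0 k
    nlinarith [mul_le_mul_of_nonneg_left ih (by linarith [h1 a] : (0:ℝ) ≤ 1 - x a),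
      mul_nonneg (h0 a) hs]

lemma qP_lower (q : ℝ) (hq0 : 0 < q) (hq1 : q < 1) :
    ∃ c : ℝ, 0 < c ∧ ∀ m, c ≤ ∏ k ∈ Finset.range m, (1 - q ^ (2 * k + 2)) := by
  have hr0 : 0 < q ^ 2 := by positivity
  have hr1 : q ^ 2 < 1 := by nlinarith
  have hfac : ∀ k : ℕ, q ^ (2 * k + 2) = (q ^ 2) ^ (k + 1) := by
    intro k; rw [← pow_mul]; ring_nf
  have hfacpos : ∀ k : ℕ, 0 < 1 - q ^ (2 * k + 2) := by
    intro k
    have h1 : q ^ (2 * k + 2) < 1 := by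
      rw [hfac]; exact pow_lt_one₀ hr0.le hr1 (Nat.succ_ne_zero k)
    linarith
  obtain ⟨N, hN⟩ := exists_pow_lt_of_lt_one (x := (1 - q ^ 2) / 2) (by linarith) hr1
  have hPpos : ∀ m, 0 < ∏ k ∈ Finset.range m, (1 - q ^ (2 * k + 2)) :=
    fun m => Finset.prod_pos fun k _ => hfacpos k
  refine ⟨(∏ k ∈ Finset.range N, (1 - q ^ (2 * k + 2))) / 2, by have := hPpos N; linarith, fun m => ?_⟩
  rcases le_or_gt m N with h | h
  · have h1 : (∏ k ∈ Finset.range N, (1 - q ^ (2 * k + 2)))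
        ≤ ∏ k ∈ Finset.range m, (1 - q ^ (2 * k + 2)) := by
      rw [← Finset.prod_range_mul_prod_Ico _ h]
      have h2 : ∏ k ∈ Finset.Ico m N, (1 - q ^ (2 * k + 2)) ≤ 1 :=
        Finset.prod_le_one (fun k _ => (hfacpos k).le)
          (fun k _ => by have := hr0; nlinarith [pow_pos hq0 (2 * k + 2)])
      nlinarith [hPpos m, (hPpos m).le, h2, Finset.prod_pos
        (fun k (_ : k ∈ Finset.Ico m N) => hfacpos k)]
    linarith [hPpos N]
  · rw [← Finset.prod_range_mul_prod_Ico _ h.le]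
    have hsum : ∑ k ∈ Finset.Ico N m, q ^ (2 * k + 2) ≤ 1 / 2 := by
      have e1 : ∑ k ∈ Finset.Ico N m, q ^ (2 * k + 2)
          = ∑ j ∈ Finset.range (m - N), q ^ (2 * (N + j) + 2) := by
        rw [Finset.sum_Ico_eq_sum_range]
      have e2 : ∀ j ∈ Finset.range (m - N), q ^ (2 * (N + j) + 2)
          = q ^ (2 * N + 2) * (q ^ 2) ^ j := by
        intro j _; rw [← pow_mul, ← pow_add]; ring_nf
      rw [e1, Finset.sum_congr rfl e2, ← Finset.mul_sum]
      have hgeom : ∑ j ∈ Finset.range (m - N), (q ^ 2) ^ j ≤ 1 / (1 - q ^ 2) := by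
        rw [geom_sum_eq (ne_of_lt hr1)]
        have e3 : ((q ^ 2) ^ (m - N) - 1) / (q ^ 2 - 1)
            = (1 - (q ^ 2) ^ (m - N)) / (1 - q ^ 2) := by
          rw [← neg_div_neg_eq]; ring_nf
        rw [e3, div_le_div_iff₀ (by linarith) (by linarith)]
        nlinarith [pow_pos hr0 (m - N)]
      have hq2N : q ^ (2 * N + 2) ≤ (q ^ 2) ^ N := by
        have : q ^ (2 * N + 2) = (q ^ 2) ^ N * q ^ 2 := by rw [← pow_mul, ← pow_add]
        rw [this]
        nlinarith [pow_pos hr0 N, pow_le_one₀ hr0.le hr1.le (n := N)]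
      calc q ^ (2 * N + 2) * ∑ j ∈ Finset.range (m - N), (q ^ 2) ^ j
          ≤ (q ^ 2) ^ N * (1 / (1 - q ^ 2)) := by
            apply mul_le_mul hq2N hgeom (Finset.sum_nonneg fun j _ => by positivity)
              (by positivity)
        _ ≤ 1 / 2 := by
            rw [mul_one_div, div_le_div_iff₀ (by linarith) (by norm_num)]
            nlinarith
    have hW : 1 - ∑ k ∈ Finset.Ico N m, q ^ (2 * k + 2)
        ≤ ∏ k ∈ Finset.Ico N m, (1 - q ^ (2 * k + 2)) :=
      weier _ (fun k => by positivity) (fun k => by linarith [hfacpos k]) _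
    have h3 : (1 : ℝ) / 2 ≤ ∏ k ∈ Finset.Ico N m, (1 - q ^ (2 * k + 2)) := by linarith
    have h4 := hPpos N
    nlinarith

/-- For `0 < q < 1`,
`∑_{m,n ≥ 0} (-1)^m q^((m+n)²/4) / ((q²;q²)_m (q²;q²)_n)
  = ∑_{n ≥ 0} q^(n²) / (q⁴;q⁴)_n`. -/
theorem stmt_8 (q : ℝ) (hq0 : 0 < q) (hq1 : q < 1) :
    (∑' p : ℕ × ℕ,
      (-1 : ℝ) ^ p.1 * q ^ (((p.1 : ℝ) + (p.2 : ℝ)) ^ 2 / 4) /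
        ((∏ k ∈ Finset.range p.1, (1 - q ^ (2 * k + 2))) *
          (∏ k ∈ Finset.range p.2, (1 - q ^ (2 * k + 2))))) =
    ∑' n : ℕ, q ^ (n ^ 2) / ∏ k ∈ Finset.range n, (1 - q ^ (4 * k + 4)) := by
  classical
  have hQ0 : 0 < q ^ 2 := by positivity
  have hQ1 : q ^ 2 < 1 := by nlinarith
  have hfac : ∀ k : ℕ, q ^ (2 * k + 2) = (q ^ 2) ^ (k + 1) := fun k => by
    rw [← pow_mul]; ring_nf
  have hPA : ∀ m : ℕ, (∏ k ∈ Finset.range m, (1 - q ^ (2 * k + 2))) = (qA (q ^ 2) m)⁻¹ := by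
    intro m; rw [qA, inv_inv]; exact Finset.prod_congr rfl fun k _ => by rw [hfac]
  set f : ℕ × ℕ → ℝ := fun p =>
    (-1 : ℝ) ^ p.1 * q ^ (((p.1 : ℝ) + (p.2 : ℝ)) ^ 2 / 4) /
      ((∏ k ∈ Finset.range p.1, (1 - q ^ (2 * k + 2))) *
        (∏ k ∈ Finset.range p.2, (1 - q ^ (2 * k + 2)))) with hfdef
  have hsummable : Summable f := by
    obtain ⟨c, hc0, hc⟩ := qP_lower q hq0 hq1
    set a : ℝ := q ^ ((1 : ℝ) / 2) with hadef
    have ha0 : 0 < a := Real.rpow_pos_of_pos hq0 _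
    have ha1 : a < 1 := Real.rpow_lt_one hq0.le hq1 (by norm_num)
    set C : ℝ := q ^ (-(1 : ℝ) / 2) / (c * c) with hCdef
    have hgeo : Summable (fun p : ℕ × ℕ => C * (a ^ p.1 * a ^ p.2)) :=
      (((summable_geometric_of_lt_one ha0.le ha1).mul_of_nonneg
        (summable_geometric_of_lt_one ha0.le ha1)
        (fun m => pow_nonneg ha0.le m) (fun n => pow_nonneg ha0.le n))).mul_left C
    apply Summable.of_norm_bounded hgeo
    rintro ⟨m, n⟩
    have hPm : 0 < ∏ k ∈ Finset.range m, (1 - q ^ (2 * k + 2)) := lt_of_lt_of_le hc0 (hc m)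
    have hPn : 0 < ∏ k ∈ Finset.range n, (1 - q ^ (2 * k + 2)) := lt_of_lt_of_le hc0 (hc n)
    have hE : (0 : ℝ) < q ^ (((m : ℝ) + (n : ℝ)) ^ 2 / 4) := Real.rpow_pos_of_pos hq0 _
    have hnorm : ‖f (m, n)‖ = q ^ (((m : ℝ) + (n : ℝ)) ^ 2 / 4) /
        ((∏ k ∈ Finset.range m, (1 - q ^ (2 * k + 2))) *
          (∏ k ∈ Finset.range n, (1 - q ^ (2 * k + 2)))) := by
      simp only [hfdef]
      rw [Real.norm_eq_abs, abs_div, abs_mul, abs_pow, abs_neg, abs_one, one_pow, one_mul,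
        abs_of_pos hE, abs_of_pos (mul_pos hPm hPn)]
    have hexple : (m : ℝ) * (1 / 2) + (n : ℝ) * (1 / 2) + (-(1 : ℝ) / 2)
        ≤ ((m : ℝ) + (n : ℝ)) ^ 2 / 4 := by
      nlinarith [sq_nonneg ((m : ℝ) + (n : ℝ) - 1)]
    have hEbound : q ^ (((m : ℝ) + (n : ℝ)) ^ 2 / 4)
        ≤ q ^ (-(1 : ℝ) / 2) * (a ^ m * a ^ n) := by
      have h1 : q ^ (((m : ℝ) + (n : ℝ)) ^ 2 / 4)
          ≤ q ^ ((m : ℝ) * (1 / 2) + (n : ℝ) * (1 / 2) + (-(1 : ℝ) / 2)) :=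
        Real.rpow_le_rpow_of_exponent_ge hq0 hq1.le hexple
      have h2 : q ^ ((m : ℝ) * (1 / 2) + (n : ℝ) * (1 / 2) + (-(1 : ℝ) / 2))
          = q ^ (-(1 : ℝ) / 2) * (a ^ m * a ^ n) := by
        rw [Real.rpow_add hq0, Real.rpow_add hq0, hadef]
        rw [show (m : ℝ) * (1 / 2) = (1 / 2) * (m : ℝ) by ring,
          show (n : ℝ) * (1 / 2) = (1 / 2) * (n : ℝ) by ring,
          Real.rpow_mul hq0.le, Real.rpow_mul hq0.le,
          Real.rpow_natCast _ m, Real.rpow_natCast _ n]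
        ring
      linarith
    rw [hnorm]
    calc q ^ (((m : ℝ) + (n : ℝ)) ^ 2 / 4) /
        ((∏ k ∈ Finset.range m, (1 - q ^ (2 * k + 2))) *
          (∏ k ∈ Finset.range n, (1 - q ^ (2 * k + 2))))
        ≤ q ^ (((m : ℝ) + (n : ℝ)) ^ 2 / 4) / (c * c) := by
          gcongr
          · exact hc m
          · exact hc n
      _ ≤ (q ^ (-(1 : ℝ) / 2) * (a ^ m * a ^ n)) / (c * c) := by
          gcongr
      _ = C * (a ^ m * a ^ n) := by rw [hCdef]; ring
  have hstep1 : (∑' p : ℕ × ℕ, f p)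
      = ∑' n : ℕ, ∑ kl ∈ Finset.HasAntidiagonal.antidiagonal n, f kl := by
    have hsig : Summable (fun x : Σ n : ℕ, Finset.HasAntidiagonal.antidiagonal n => f (x.2 : ℕ × ℕ)) :=
      (Finset.HasAntidiagonal.sigmaAntidiagonalEquivProd (A := ℕ)).summable_iff.mpr hsummable
    rw [← (Finset.HasAntidiagonal.sigmaAntidiagonalEquivProd (A := ℕ)).tsum_eq f]
    simp only [Finset.HasAntidiagonal.sigmaAntidiagonalEquivProd_apply]
    rw [hsig.tsum_sigma' (fun n => (hasSum_fintype _).summable)]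
    exact tsum_congr fun n => Finset.tsum_subtype (Finset.HasAntidiagonal.antidiagonal n) f
  have hstep2 : ∀ n : ℕ, (∑ kl ∈ Finset.HasAntidiagonal.antidiagonal n, f kl)
      = q ^ ((n : ℝ) ^ 2 / 4) * qB (q ^ 2) n := by
    intro n
    rw [Finset.Nat.sum_antidiagonal_eq_sum_range_succ_mk, qB, Finset.mul_sum]
    apply Finset.sum_congr rfl
    intro m hm
    have hm' : m ≤ n := by simpa [Nat.lt_succ_iff] using hm
    have hcast : ((n - m : ℕ) : ℝ) = (n : ℝ) - m := Nat.cast_sub hm'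
    have hexp : ((m : ℝ) + ((n - m : ℕ) : ℝ)) ^ 2 / 4 = (n : ℝ) ^ 2 / 4 := by
      rw [hcast]; ring
    simp only [hfdef]
    rw [hPA, hPA, hexp, div_eq_mul_inv, mul_inv, inv_inv, inv_inv]
    ring
  have hstep3 : (∑' n : ℕ, q ^ ((n : ℝ) ^ 2 / 4) * qB (q ^ 2) n)
      = ∑' t : ℕ, q ^ (((2 * t : ℕ) : ℝ) ^ 2 / 4) * qB (q ^ 2) (2 * t) := by
    have hinj : Function.Injective (fun t : ℕ => 2 * t) := fun a b h => by
      have : 2 * a = 2 * b := h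
      omega
    have hsupp : Function.support (fun n : ℕ => q ^ ((n : ℝ) ^ 2 / 4) * qB (q ^ 2) n)
        ⊆ Set.range (fun t : ℕ => 2 * t) := by
      intro n hn
      rcases Nat.even_or_odd n with ⟨t, ht⟩ | ⟨t, ht⟩
      · exact ⟨t, by simp; omega⟩
      · exfalso
        apply hn
        simp only [ht]
        rw [qB_odd, mul_zero]
    exact (hinj.tsum_eq hsupp).symm
  have hstep4 : ∀ t : ℕ, q ^ (((2 * t : ℕ) : ℝ) ^ 2 / 4) * qB (q ^ 2) (2 * t)
      = q ^ (t ^ 2) / ∏ k ∈ Finset.range t, (1 - q ^ (4 * k + 4)) := by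
    intro t
    have hexp : (((2 * t : ℕ) : ℝ)) ^ 2 / 4 = ((t ^ 2 : ℕ) : ℝ) := by push_cast; ring
    rw [hexp, Real.rpow_natCast, qB_even hQ0 hQ1 t, div_eq_mul_inv]
    congr 2
    apply Finset.prod_congr rfl
    intro k _
    congr 1
    rw [← pow_mul]
    ring_nf
  rw [hstep1, tsum_congr hstep2, hstep3, tsum_congr hstep4]
end

section
/- For every real number q with 0 < q < 1, the double series ∑_{m,n ≥ 0} (-1)^m · q^{(m+n)²/4 + m + n} / ((q²;q²)_m (q²;q²)_n) equals the single series ∑_{n=0}^{∞} q^{n² + 2n} / (q⁴;q⁴)_n. -/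
open Finset

namespace Stmt9Aux

/-- `(Q;Q)_n` -/
noncomputable def P (Q : ℝ) (n : ℕ) : ℝ := ∏ k ∈ range n, (1 - Q ^ (k + 1))

variable {Q : ℝ} (hQ0 : 0 < Q) (hQ1 : Q < 1)

lemma P_zero : P Q 0 = 1 := by simp [P]

lemma P_succ (n : ℕ) : P Q (n + 1) = P Q n * (1 - Q ^ (n + 1)) := by
  simp [P, prod_range_succ]

include hQ0 hQ1 in
lemma P_pos (n : ℕ) : 0 < P Q n := by
  refine prod_pos fun k _ => ?_
  have : Q ^ (k + 1) < 1 := pow_lt_one₀ hQ0.le hQ1 (Nat.succ_ne_zero k)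
  linarith

include hQ0 hQ1 in
lemma P_ne (n : ℕ) : P Q n ≠ 0 := (P_pos hQ0 hQ1 n).ne'

/-- Gaussian binomial `[s m]_Q` -/
noncomputable def gb (Q : ℝ) (s m : ℕ) : ℝ :=
  if m ≤ s then P Q s / (P Q m * P Q (s - m)) else 0

include hQ0 hQ1 in
lemma gb_zero (s : ℕ) : gb Q s 0 = 1 := by
  simp [gb, P_zero, div_self (P_ne hQ0 hQ1 s)]

include hQ0 hQ1 in
lemma gb_self (s : ℕ) : gb Q s s = 1 := by
  simp [gb, P_zero, div_self (P_ne hQ0 hQ1 s)]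

include hQ0 hQ1 in
lemma gb_symm {s m : ℕ} (h : m ≤ s) : gb Q s (s - m) = gb Q s m := by
  simp only [gb, if_pos h, if_pos (Nat.sub_le s m), Nat.sub_sub_self h]
  ring

include hQ0 hQ1 in
lemma pascal2 (s m : ℕ) :
    gb Q (s + 1) (m + 1) = Q ^ (m + 1) * gb Q s (m + 1) + gb Q s m := by
  rcases lt_trichotomy m s with h | rfl | h
  · obtain ⟨d, rfl⟩ : ∃ d, s = m + 1 + d := ⟨s - (m + 1), by omega⟩
    have h1 : m + 1 ≤ m + 1 + d + 1 := by omega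
    have h2 : m + 1 ≤ m + 1 + d := by omega
    have h3 : m ≤ m + 1 + d := by omega
    rw [gb, if_pos h1, gb, if_pos h2, gb, if_pos h3]
    have e1 : m + 1 + d + 1 - (m + 1) = d + 1 := by omega
    have e2 : m + 1 + d - (m + 1) = d := by omega
    have e3 : m + 1 + d - m = d + 1 := by omega
    rw [e1, e2, e3]
    rw [show P Q (m + 1 + d + 1) = P Q (m + 1 + d) * (1 - Q ^ (m + 1 + d + 1)) from P_succ _,
      show P Q (d + 1) = P Q d * (1 - Q ^ (d + 1)) from P_succ _,
      show P Q (m + 1) = P Q m * (1 - Q ^ (m + 1)) from P_succ _]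
    have hPm := P_ne hQ0 hQ1 m
    have hPd := P_ne hQ0 hQ1 d
    have hm1 : (1 : ℝ) - Q ^ (m + 1) ≠ 0 := by
      have : Q ^ (m + 1) < 1 := pow_lt_one₀ hQ0.le hQ1 (Nat.succ_ne_zero m)
      intro h; nlinarith
    have hd1 : (1 : ℝ) - Q ^ (d + 1) ≠ 0 := by
      have : Q ^ (d + 1) < 1 := pow_lt_one₀ hQ0.le hQ1 (Nat.succ_ne_zero d)
      intro h; nlinarith
    field_simp
    ring
  · rw [gb_self hQ0 hQ1, gb_self hQ0 hQ1, gb, if_neg (by omega)]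
    ring
  · rw [gb, if_neg (by omega), gb, if_neg (by omega), gb, if_neg (by omega)]
    ring

/-- `A s = ∑ (-1)^m [s m]` -/
noncomputable def A (Q : ℝ) (s : ℕ) : ℝ := ∑ m ∈ range (s + 1), (-1 : ℝ) ^ m * gb Q s m

/-- `C s = ∑ (-1)^m Q^(s-m) [s m]` -/
noncomputable def C (Q : ℝ) (s : ℕ) : ℝ :=
  ∑ m ∈ range (s + 1), (-1 : ℝ) ^ m * Q ^ (s - m) * gb Q s m

/-- `D s = ∑ (-1)^m Q^m [s m]` -/
noncomputable def D (Q : ℝ) (s : ℕ) : ℝ :=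
  ∑ m ∈ range (s + 1), (-1 : ℝ) ^ m * Q ^ m * gb Q s m

include hQ0 hQ1 in
lemma D_eq (s : ℕ) : D Q s = (-1 : ℝ) ^ s * C Q s := by
  rw [D, C, ← Finset.sum_range_reflect (fun m => (-1 : ℝ) ^ m * Q ^ m * gb Q s m) (s + 1),
    mul_sum]
  refine Finset.sum_congr rfl fun m hm => ?_
  rw [mem_range] at hm
  have hms : m ≤ s := by omega
  have e1 : s + 1 - 1 - m = s - m := by omega
  rw [e1, gb_symm hQ0 hQ1 hms]
  have : (-1 : ℝ) ^ (s - m) = (-1 : ℝ) ^ s * (-1 : ℝ) ^ m := by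
    rw [← pow_add, show s + m = s - m + 2 * m by omega, pow_add]
    simp [pow_mul]
  rw [this]; ring

include hQ0 hQ1 in
lemma recA (s : ℕ) : A Q (s + 1) = (-1 : ℝ) ^ s * C Q s - A Q s := by
  rw [← D_eq hQ0 hQ1]
  rw [A, Finset.sum_range_succ' (fun m => (-1 : ℝ) ^ m * gb Q (s + 1) m) (s + 1)]
  simp only [pascal2 hQ0 hQ1, pow_zero, one_mul, gb_zero hQ0 hQ1]
  have expand : ∀ m : ℕ, (-1 : ℝ) ^ (m + 1) * (Q ^ (m + 1) * gb Q s (m + 1) + gb Q s m)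
      = (-1 : ℝ) ^ (m + 1) * Q ^ (m + 1) * gb Q s (m + 1) + (-(-1 : ℝ) ^ m) * gb Q s m := by
    intro m; rw [pow_succ]; ring
  rw [Finset.sum_congr rfl fun m _ => expand m, Finset.sum_add_distrib]
  have e1 : ∑ m ∈ range (s + 1), (-1 : ℝ) ^ (m + 1) * Q ^ (m + 1) * gb Q s (m + 1)
      = D Q s - 1 := by
    have := Finset.sum_range_succ' (fun m => (-1 : ℝ) ^ m * Q ^ m * gb Q s m) (s + 1)
    -- ∑_{m<s+2} = ∑_{m<s+1} f(m+1) + f 0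
    have hD2 : ∑ m ∈ range (s + 1 + 1), (-1 : ℝ) ^ m * Q ^ m * gb Q s m = D Q s := by
      rw [Finset.sum_range_succ, D]
      have : gb Q s (s + 1) = 0 := by rw [gb, if_neg (by omega)]
      rw [this]; ring
    rw [hD2] at this
    simp only [pow_zero, one_mul, gb_zero hQ0 hQ1] at this
    linarith [this]
  have e2 : ∑ m ∈ range (s + 1), (-(-1 : ℝ) ^ m) * gb Q s m = -A Q s := by
    rw [A, ← Finset.sum_neg_distrib]
    exact Finset.sum_congr rfl fun m _ => by ring
  rw [e1, e2]; ring

include hQ0 hQ1 in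
lemma recC (s : ℕ) : C Q (s + 1) = Q ^ (s + 1) * A Q s - C Q s := by
  rw [C, Finset.sum_range_succ' (fun m => (-1 : ℝ) ^ m * Q ^ (s + 1 - m) * gb Q (s + 1) m) (s + 1)]
  simp only [pascal2 hQ0 hQ1, pow_zero, one_mul, Nat.sub_zero, gb_zero hQ0 hQ1, mul_one]
  have expand : ∀ m ∈ range (s + 1),
      (-1 : ℝ) ^ (m + 1) * Q ^ (s + 1 - (m + 1)) * (Q ^ (m + 1) * gb Q s (m + 1) + gb Q s m)
      = Q ^ (s + 1) * ((-1 : ℝ) ^ (m + 1) * gb Q s (m + 1))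
        + (-((-1 : ℝ) ^ m * Q ^ (s - m))) * gb Q s m := by
    intro m hm
    rw [mem_range] at hm
    have e0 : s + 1 - (m + 1) = s - m := by omega
    have e1 : Q ^ (s - m) * Q ^ (m + 1) = Q ^ (s + 1) := by
      rw [← pow_add]; congr 1; omega
    rw [e0]
    linear_combination ((-1 : ℝ) ^ (m + 1) * gb Q s (m + 1)) * e1
  rw [Finset.sum_congr rfl expand, Finset.sum_add_distrib]
  have e1 : ∑ m ∈ range (s + 1), Q ^ (s + 1) * ((-1 : ℝ) ^ (m + 1) * gb Q s (m + 1))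
      = Q ^ (s + 1) * (A Q s - 1) := by
    rw [← mul_sum]; congr 1
    have hA2 : ∑ m ∈ range (s + 1 + 1), (-1 : ℝ) ^ m * gb Q s m = A Q s := by
      rw [Finset.sum_range_succ, A]
      have : gb Q s (s + 1) = 0 := by rw [gb, if_neg (by omega)]
      rw [this]; ring
    have := Finset.sum_range_succ' (fun m => (-1 : ℝ) ^ m * gb Q s m) (s + 1)
    rw [hA2] at this
    simp only [pow_zero, one_mul, gb_zero hQ0 hQ1] at this
    linarith [this]
  have e2 : ∑ m ∈ range (s + 1), (-((-1 : ℝ) ^ m * Q ^ (s - m))) * gb Q s m = -C Q s := by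
    rw [C, ← Finset.sum_neg_distrib]
    exact Finset.sum_congr rfl fun m _ => by ring
  rw [e1, e2]; ring

/-- odd-part Pochhammer `(Q;Q²)_n` -/
noncomputable def pOdd (Q : ℝ) (n : ℕ) : ℝ := ∏ k ∈ range n, (1 - Q ^ (2 * k + 1))

include hQ0 hQ1 in
lemma A_zero : A Q 0 = 1 := by simp [A, gb_zero hQ0 hQ1]

include hQ0 hQ1 in
lemma C_zero : C Q 0 = 1 := by simp [C, gb_zero hQ0 hQ1]

include hQ0 hQ1 in
lemma AC_closed (n : ℕ) :
    A Q (2 * n) = pOdd Q n ∧ A Q (2 * n + 1) = 0 ∧ C Q (2 * n) = pOdd Q n ∧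
      C Q (2 * n + 1) = -(1 - Q ^ (2 * n + 1)) * pOdd Q n := by
  induction n with
  | zero =>
    have hA0 := A_zero hQ0 hQ1 (Q := Q)
    have hC0 := C_zero hQ0 hQ1 (Q := Q)
    have hA1 := recA hQ0 hQ1 0
    have hC1 := recC hQ0 hQ1 0
    simp [hA0, hC0] at hA1 hC1
    refine ⟨by simpa [pOdd] using hA0, by simpa using hA1, by simpa [pOdd] using hC0, ?_⟩
    simp only [pOdd, range_zero, prod_empty, mul_one]
    rw [hC1]; ring
  | succ n ih =>
    obtain ⟨hA, hA', hC, hC'⟩ := ih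
    have h1 : A Q (2 * (n + 1)) = (1 - Q ^ (2 * n + 1)) * pOdd Q n := by
      have := recA hQ0 hQ1 (2 * n + 1)
      rw [show 2 * (n + 1) = 2 * n + 1 + 1 by ring] at *
      rw [this, hA', hC']
      have : (-1 : ℝ) ^ (2 * n + 1) = -1 := by simp [pow_succ, pow_mul]
      rw [this]; ring
    have hpOdd : pOdd Q (n + 1) = pOdd Q n * (1 - Q ^ (2 * n + 1)) := by
      simp [pOdd, prod_range_succ]
    have h2 : C Q (2 * (n + 1)) = (1 - Q ^ (2 * n + 1)) * pOdd Q n := by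
      have := recC hQ0 hQ1 (2 * n + 1)
      rw [show 2 * (n + 1) = 2 * n + 1 + 1 by ring] at *
      rw [this, hA', hC']; ring
    refine ⟨by rw [h1, hpOdd]; ring, ?_, by rw [h2, hpOdd]; ring, ?_⟩
    · have := recA hQ0 hQ1 (2 * (n + 1))
      rw [this, h1, h2]
      have : (-1 : ℝ) ^ (2 * (n + 1)) = 1 := by simp [pow_mul]
      rw [this]; ring
    · have := recC hQ0 hQ1 (2 * (n + 1))
      rw [this, h1, h2, hpOdd]
      ring

/-- even-part Pochhammer `(Q²;Q²)_n` -/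
noncomputable def pEven (Q : ℝ) (n : ℕ) : ℝ := ∏ k ∈ range n, (1 - Q ^ (2 * k + 2))

lemma P_two_mul (n : ℕ) : P Q (2 * n) = pOdd Q n * pEven Q n := by
  induction n with
  | zero => simp [P, pOdd, pEven]
  | succ n ih =>
    rw [show 2 * (n + 1) = 2 * n + 1 + 1 by ring, P_succ, P_succ, ih]
    simp only [pOdd, pEven, prod_range_succ]
    rw [show 2 * n + 1 + 1 = 2 * n + 2 by ring]
    ring

include hQ0 hQ1 in
lemma pOdd_pos (n : ℕ) : 0 < pOdd Q n := by
  refine prod_pos fun k _ => ?_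
  have : Q ^ (2 * k + 1) < 1 := pow_lt_one₀ hQ0.le hQ1 (by omega)
  linarith

include hQ0 hQ1 in
lemma pEven_pos (n : ℕ) : 0 < pEven Q n := by
  refine prod_pos fun k _ => ?_
  have : Q ^ (2 * k + 2) < 1 := pow_lt_one₀ hQ0.le hQ1 (by omega)
  linarith

lemma one_sub_sum_le_prod (g : ℕ → ℝ) (h0 : ∀ k, 0 ≤ g k) (h1 : ∀ k, g k ≤ 1) (n : ℕ) :
    1 - ∑ k ∈ range n, g k ≤ ∏ k ∈ range n, (1 - g k) := by
  induction n with
  | zero => simp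
  | succ n ih =>
    rw [prod_range_succ, sum_range_succ]
    have hgn : (0:ℝ) ≤ 1 - g n := by linarith [h1 n]
    have hs : 0 ≤ ∑ k ∈ range n, g k := sum_nonneg fun k _ => h0 k
    nlinarith [mul_le_mul_of_nonneg_right ih hgn, mul_nonneg hs (h0 n)]

include hQ0 hQ1 in
lemma P_lower : ∃ c : ℝ, 0 < c ∧ ∀ m, c ≤ P Q m := by
  obtain ⟨N, hN⟩ := exists_pow_lt_of_lt_one (show (0:ℝ) < (1 - Q)/2 by linarith) hQ1
  refine ⟨P Q N / 2, by have := P_pos hQ0 hQ1 N; linarith, fun m => ?_⟩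
  rcases le_total m N with h | h
  · obtain ⟨d, rfl⟩ : ∃ d, N = m + d := ⟨N - m, by omega⟩
    have hle : P Q (m + d) ≤ P Q m := by
      rw [P, prod_range_add]
      have h1 : ∏ k ∈ range d, (1 - Q ^ (m + k + 1)) ≤ 1 := by
        refine prod_le_one (fun k _ => ?_) (fun k _ => ?_)
        · have : Q ^ (m + k + 1) < 1 := pow_lt_one₀ hQ0.le hQ1 (by omega)
          linarith
        · have : 0 < Q ^ (m + k + 1) := by positivity
          linarith
      have h2 : 0 ≤ ∏ k ∈ range m, (1 - Q ^ (k + 1)) := (P_pos hQ0 hQ1 m).le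
      calc (∏ k ∈ range m, (1 - Q ^ (k + 1))) * ∏ k ∈ range d, (1 - Q ^ (m + k + 1))
          ≤ (∏ k ∈ range m, (1 - Q ^ (k + 1))) * 1 := by
            exact mul_le_mul_of_nonneg_left h1 h2
        _ = P Q m := by rw [mul_one]; rfl
    linarith [P_pos hQ0 hQ1 (m + d)]
  · obtain ⟨d, rfl⟩ : ∃ d, m = N + d := ⟨m - N, by omega⟩
    have hS0 : (0:ℝ) ≤ ∑ k ∈ range d, Q ^ k := sum_nonneg fun k _ => by positivity
    have h1 : (∑ k ∈ range d, Q ^ k) * (1 - Q) ≤ 1 := by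
      have hg := geom_sum_mul Q d
      nlinarith [pow_nonneg hQ0.le d]
    have h2 : Q ^ (N + 1) ≤ (1 - Q)/2 := by
      have : Q ^ (N + 1) ≤ Q ^ N := by
        rw [pow_succ]
        nlinarith [pow_nonneg hQ0.le N]
      linarith
    have hsum : ∑ k ∈ range d, Q ^ (N + k + 1) ≤ 1/2 := by
      have e : ∑ k ∈ range d, Q ^ (N + k + 1) = Q ^ (N + 1) * ∑ k ∈ range d, Q ^ k := by
        rw [mul_sum]
        refine sum_congr rfl fun k _ => ?_
        rw [← pow_add]
        congr 1
        omega
      rw [e]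
      nlinarith [mul_le_mul_of_nonneg_right h2 hS0]
    have hprod : 1/2 ≤ ∏ k ∈ range d, (1 - Q ^ (N + k + 1)) := by
      have := one_sub_sum_le_prod (fun k => Q ^ (N + k + 1))
        (fun k => by positivity)
        (fun k => (pow_le_one₀ hQ0.le hQ1.le)) d
      linarith
    have : P Q (N + d) = P Q N * ∏ k ∈ range d, (1 - Q ^ (N + k + 1)) := by
      rw [P, prod_range_add]; rfl
    rw [this]
    have hPN := P_pos hQ0 hQ1 N
    calc P Q N / 2 = P Q N * (1/2) := by ring
      _ ≤ P Q N * ∏ k ∈ range d, (1 - Q ^ (N + k + 1)) :=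
          mul_le_mul_of_nonneg_left hprod hPN.le

end Stmt9Aux
set_option maxHeartbeats 1600000 in
open Finset Stmt9Aux in
/-- For `0 < q < 1`,
`∑_{m,n ≥ 0} (-1)^m q^((m+n)²/4 + m + n) / ((q²;q²)_m (q²;q²)_n)
  = ∑_{n ≥ 0} q^(n²+2n) / (q⁴;q⁴)_n`. -/
theorem stmt_9 (q : ℝ) (hq0 : 0 < q) (hq1 : q < 1) :
    (∑' p : ℕ × ℕ,
      (-1 : ℝ) ^ p.1 * q ^ (((p.1 : ℝ) + (p.2 : ℝ)) ^ 2 / 4 + (p.1 : ℝ) + (p.2 : ℝ)) /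
        ((∏ k ∈ Finset.range p.1, (1 - q ^ (2 * k + 2))) *
          (∏ k ∈ Finset.range p.2, (1 - q ^ (2 * k + 2))))) =
    ∑' n : ℕ, q ^ (n ^ 2 + 2 * n) / ∏ k ∈ Finset.range n, (1 - q ^ (4 * k + 4)) := by
  have hQ0 : (0:ℝ) < q ^ 2 := by positivity
  have hQ1 : q ^ 2 < 1 := by nlinarith
  set Q : ℝ := q ^ 2 with hQ
  have hprod2 : ∀ n, (∏ k ∈ Finset.range n, (1 - q ^ (2 * k + 2))) = P Q n := by
    intro n
    refine Finset.prod_congr rfl fun k _ => ?_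
    rw [hQ, ← pow_mul]
    ring_nf
  have hprod4 : ∀ n, (∏ k ∈ Finset.range n, (1 - q ^ (4 * k + 4))) = pEven Q n := by
    intro n
    rw [pEven]
    refine Finset.prod_congr rfl fun k _ => ?_
    rw [hQ, ← pow_mul]
    ring_nf
  set F : ℕ × ℕ → ℝ := fun p =>
    (-1 : ℝ) ^ p.1 * q ^ (((p.1 : ℝ) + (p.2 : ℝ)) ^ 2 / 4 + (p.1 : ℝ) + (p.2 : ℝ)) /
      (P Q p.1 * P Q p.2) with hF
  have hLHS : (∑' p : ℕ × ℕ,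
      (-1 : ℝ) ^ p.1 * q ^ (((p.1 : ℝ) + (p.2 : ℝ)) ^ 2 / 4 + (p.1 : ℝ) + (p.2 : ℝ)) /
        ((∏ k ∈ Finset.range p.1, (1 - q ^ (2 * k + 2))) *
          (∏ k ∈ Finset.range p.2, (1 - q ^ (2 * k + 2))))) = ∑' p, F p :=
    tsum_congr fun p => by rw [hprod2, hprod2]
  -- summability
  obtain ⟨c, hc0, hc⟩ := P_lower hQ0 hQ1
  have habs : ∀ p : ℕ × ℕ, |F p| ≤ (q ^ p.1 / c) * (q ^ p.2 / c) := by
    rintro ⟨m, n⟩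
    have hrp : (0:ℝ) < q ^ (((m : ℝ) + (n : ℝ)) ^ 2 / 4 + (m : ℝ) + (n : ℝ)) :=
      Real.rpow_pos_of_pos hq0 _
    have hPm := P_pos hQ0 hQ1 m
    have hPn := P_pos hQ0 hQ1 n
    have e1 : |F (m, n)| = q ^ (((m : ℝ) + (n : ℝ)) ^ 2 / 4 + (m : ℝ) + (n : ℝ)) /
        (P Q m * P Q n) := by
      rw [hF]
      simp only [abs_div, abs_mul, abs_pow, abs_neg, abs_one, one_pow, one_mul,
        abs_of_pos hrp, abs_of_pos (mul_pos hPm hPn)]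
    rw [e1]
    have hnum : q ^ (((m : ℝ) + (n : ℝ)) ^ 2 / 4 + (m : ℝ) + (n : ℝ)) ≤ q ^ m * q ^ n := by
      have h1 : q ^ (((m : ℝ) + (n : ℝ)) ^ 2 / 4 + (m : ℝ) + (n : ℝ)) ≤
          q ^ ((m : ℝ) + (n : ℝ)) :=
        Real.rpow_le_rpow_of_exponent_ge hq0 hq1.le
          (by nlinarith [sq_nonneg ((m : ℝ) + (n : ℝ))])
      have h2 : q ^ ((m : ℝ) + (n : ℝ)) = q ^ m * q ^ n := by
        rw [Real.rpow_add hq0, Real.rpow_natCast, Real.rpow_natCast]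
      linarith [h1, h2.le, h2.ge]
    calc q ^ (((m : ℝ) + (n : ℝ)) ^ 2 / 4 + (m : ℝ) + (n : ℝ)) / (P Q m * P Q n)
        ≤ (q ^ m * q ^ n) / (c * c) := by
          apply div_le_div₀ (by positivity) hnum (by positivity)
          exact mul_le_mul (hc m) (hc n) hc0.le hPm.le
      _ = (q ^ m / c) * (q ^ n / c) := by ring
  have hgeo : Summable fun k : ℕ => q ^ k / c :=
    (summable_geometric_of_lt_one hq0.le hq1).div_const c
  have hbound : Summable fun p : ℕ × ℕ => (q ^ p.1 / c) * (q ^ p.2 / c) :=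
    Summable.mul_of_nonneg hgeo hgeo (fun k => by positivity) (fun k => by positivity)
  have hsumF : Summable F :=
    Summable.of_abs (Summable.of_nonneg_of_le (fun p => abs_nonneg _) habs hbound)
  -- regroup along antidiagonals
  have hsig : Summable fun x : Σ s : ℕ, Finset.HasAntidiagonal.antidiagonal s => F x.2 :=
    Finset.HasAntidiagonal.sigmaAntidiagonalEquivProd.summable_iff.mpr hsumF
  have h1 : ∑' p, F p = ∑' x : Σ s : ℕ, Finset.HasAntidiagonal.antidiagonal s, F x.2 :=
    (Finset.HasAntidiagonal.sigmaAntidiagonalEquivProd.tsum_eq F).symm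
  have h2 : ∑' x : Σ s : ℕ, Finset.HasAntidiagonal.antidiagonal s, F x.2 =
      ∑' s : ℕ, ∑' p : Finset.HasAntidiagonal.antidiagonal s, F p :=
    Summable.tsum_sigma' (fun s => Summable.of_finite) hsig
  have h3 : ∀ s : ℕ, ∑' p : Finset.HasAntidiagonal.antidiagonal s, F ↑p = ∑ p ∈ Finset.HasAntidiagonal.antidiagonal s, F p :=
    fun s => Finset.tsum_subtype _ F
  -- per-diagonal evaluation
  have key : ∀ s : ℕ, ∑ p ∈ Finset.HasAntidiagonal.antidiagonal s, F p =
      q ^ ((s : ℝ) ^ 2 / 4 + (s : ℝ)) * A Q s / P Q s := by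
    intro s
    rw [Finset.Nat.sum_antidiagonal_eq_sum_range_succ_mk, A, Finset.mul_sum, Finset.sum_div]
    refine Finset.sum_congr rfl fun k hk => ?_
    rw [Finset.mem_range] at hk
    have hks : k ≤ s := by omega
    have hcast : ((s - k : ℕ) : ℝ) = (s : ℝ) - (k : ℝ) := Nat.cast_sub hks
    have hexp : ((k : ℝ) + ((s - k : ℕ) : ℝ)) ^ 2 / 4 + (k : ℝ) + ((s - k : ℕ) : ℝ) =
        (s : ℝ) ^ 2 / 4 + (s : ℝ) := by rw [hcast]; ring
    rw [hF]
    simp only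
    rw [hexp, gb, if_pos hks]
    have hPs := P_ne hQ0 hQ1 s
    have hPk := P_ne hQ0 hQ1 k
    have hPsk := P_ne hQ0 hQ1 (s - k)
    field_simp
  set g : ℕ → ℝ := fun s => q ^ ((s : ℝ) ^ 2 / 4 + (s : ℝ)) * A Q s / P Q s with hg
  have hLHS2 : (∑' p, F p) = ∑' s, g s := by
    rw [h1, h2]
    exact tsum_congr fun s => by rw [h3 s, key s]
  -- reindex over even integers
  have hg_odd : ∀ n : ℕ, g (2 * n + 1) = 0 := by
    intro n
    have hA := (AC_closed hQ0 hQ1 n).2.1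
    rw [hg]
    simp only [hA, mul_zero, zero_div]
  have hinj : Function.Injective fun n : ℕ => 2 * n := fun a b h => by simp only [] at h; omega
  have hsupp : Function.support g ⊆ Set.range fun n : ℕ => 2 * n := by
    intro s hs
    rcases Nat.even_or_odd s with ⟨t, ht⟩ | ⟨t, ht⟩
    · exact ⟨t, by simp only []; omega⟩
    · exact absurd (ht ▸ hg_odd t) hs
  have h4 : ∑' n : ℕ, g (2 * n) = ∑' s, g s := hinj.tsum_eq hsupp
  -- evaluate even terms
  have heven : ∀ n : ℕ, g (2 * n) =
      q ^ (n ^ 2 + 2 * n) / ∏ k ∈ Finset.range n, (1 - q ^ (4 * k + 4)) := by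
    intro n
    have hA := (AC_closed hQ0 hQ1 n).1
    have hP2 : P Q (2 * n) = pOdd Q n * pEven Q n := P_two_mul n
    have hpo := (pOdd_pos hQ0 hQ1 n).ne'
    have hpe := (pEven_pos hQ0 hQ1 n).ne'
    have hexp : (((2 * n : ℕ) : ℝ)) ^ 2 / 4 + ((2 * n : ℕ) : ℝ) =
        (((n ^ 2 + 2 * n : ℕ) : ℝ)) := by push_cast; ring
    rw [hg]
    simp only
    rw [hA, hP2, hexp, Real.rpow_natCast, hprod4]
    field_simp
  rw [hLHS, hLHS2, ← h4]
  exact tsum_congr heven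
end

section
/- For every real number q with 0 < q < 1 and every complex number z, the product of the two entire series ∑_{m=0}^{∞} i^m z^m q^{m(m-1)/2 + 3m/4} / (q;q)_m and ∑_{n=0}^{∞} (-i)^n z^n q^{n(n-1)/2 + 3n/4} / (q;q)_n equals the infinite product (-z² q^{3/2}; q²)_∞ = ∏_{k=0}^{∞} (1 + z² q^{3/2 + 2k}). -/
open Finset Filter

noncomputable section

/-- Partial q-Pochhammer product `(q;q)_n`. -/
def Pq (q : ℝ) (n : ℕ) : ℝ := ∏ k ∈ Finset.range n, (1 - q ^ (k + 1))

/-- Triangular numbers `m(m-1)/2`. -/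
def tri : ℕ → ℕ
  | 0 => 0
  | (m + 1) => tri m + m

/-- Gauss coefficients `q^(tri m) * (q;q)_n / ((q;q)_m (q;q)_{n-m})`. -/
def cq (q : ℝ) (n m : ℕ) : ℝ :=
  if m ≤ n then q ^ tri m * Pq q n / (Pq q m * Pq q (n - m)) else 0

variable {q : ℝ}

lemma Pq_pos (hq0 : 0 < q) (hq1 : q < 1) (n : ℕ) : 0 < Pq q n := by
  apply Finset.prod_pos
  intro k _
  have : q ^ (k + 1) < 1 := pow_lt_one₀ hq0.le hq1 (Nat.succ_ne_zero k)
  linarith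

lemma Pq_le_one (hq0 : 0 < q) (hq1 : q < 1) (n : ℕ) : Pq q n ≤ 1 := by
  apply Finset.prod_le_one
  · intro k _
    have : q ^ (k + 1) < 1 := pow_lt_one₀ hq0.le hq1 (Nat.succ_ne_zero k)
    linarith
  · intro k _
    have : 0 < q ^ (k + 1) := pow_pos hq0 _
    linarith

lemma Pq_succ (n : ℕ) : Pq q (n + 1) = Pq q n * (1 - q ^ (n + 1)) :=
  Finset.prod_range_succ _ n

lemma Pq_antitone (hq0 : 0 < q) (hq1 : q < 1) : Antitone (Pq q) := by
  apply antitone_nat_of_succ_le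
  intro n
  rw [Pq_succ]
  have h1 : 0 < q ^ (n+1) := pow_pos hq0 _
  nlinarith [Pq_pos hq0 hq1 n]

lemma cq_zero (hq0 : 0 < q) (hq1 : q < 1) (n : ℕ) : cq q n 0 = 1 := by
  have h := (Pq_pos hq0 hq1 n).ne'
  have h0 : Pq q 0 = 1 := by simp [Pq]
  rw [cq, if_pos (Nat.zero_le n)]
  simp only [tri, pow_zero, one_mul, h0, Nat.sub_zero]
  exact div_self h

lemma cq_of_gt {n m : ℕ} (h : n < m) : cq q n m = 0 := by
  simp [cq, Nat.not_le.mpr h]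

lemma cq_pascal (hq0 : 0 < q) (hq1 : q < 1) {n m : ℕ} (h : m ≤ n) :
    cq q (n + 1) (m + 1) = cq q n (m + 1) + q ^ n * cq q n m := by
  have hq' : ∀ j : ℕ, (1 : ℝ) - q ^ (j + 1) ≠ 0 := by
    intro j
    have : q ^ (j + 1) < 1 := pow_lt_one₀ hq0.le hq1 (Nat.succ_ne_zero j)
    linarith
  rcases eq_or_lt_of_le h with rfl | hlt
  · rw [cq_of_gt (Nat.lt_succ_self m)]
    have hPm := (Pq_pos hq0 hq1 m).ne'
    have hPm1 := (Pq_pos hq0 hq1 (m + 1)).ne'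
    have h0 : Pq q 0 = 1 := by simp [Pq]
    rw [cq, if_pos le_rfl, cq, if_pos (le_refl m)]
    simp only [Nat.sub_self, h0, mul_one, tri]
    field_simp
    ring
  · obtain ⟨e, rfl⟩ : ∃ e, n = m + e + 1 := ⟨n - m - 1, by omega⟩
    rw [cq, if_pos (by omega : m + 1 ≤ m + e + 1 + 1), cq,
      if_pos (by omega : m + 1 ≤ m + e + 1), cq, if_pos (by omega : m ≤ m + e + 1)]
    have e1 : m + e + 1 + 1 - (m + 1) = e + 1 := by omega
    have e2 : m + e + 1 - (m + 1) = e := by omega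
    have e3 : m + e + 1 - m = e + 1 := by omega
    rw [e1, e2, e3]
    have p1 : Pq q (m + e + 1 + 1) = Pq q (m + e + 1) * (1 - q ^ (m + e + 1 + 1)) :=
      Pq_succ _
    have p2 : Pq q (m + 1) = Pq q m * (1 - q ^ (m + 1)) := Pq_succ _
    have p3 : Pq q (e + 1) = Pq q e * (1 - q ^ (e + 1)) := Pq_succ _
    rw [p1, p2, p3, tri]
    have hPm := (Pq_pos hq0 hq1 m).ne'
    have hPe := (Pq_pos hq0 hq1 e).ne'
    have hPme := (Pq_pos hq0 hq1 (m + e + 1)).ne'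
    have n1 := hq' m
    have n2 := hq' e
    have n3 := hq' (m + e + 1)
    field_simp
    ring

lemma key_identity (hq0 : 0 < q) (hq1 : q < 1) (a : ℂ) (n : ℕ) :
    ∏ k ∈ Finset.range n, (1 + a * (q : ℂ) ^ k) =
      ∑ m ∈ Finset.range (n + 1), ((cq q n m : ℝ) : ℂ) * a ^ m := by
  induction n with
  | zero => simp [cq_zero hq0 hq1]
  | succ n ih =>
    rw [Finset.prod_range_succ, ih]
    rw [Finset.sum_range_succ' (fun m => ((cq q (n+1) m : ℝ) : ℂ) * a ^ m) (n+1)]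
    have hpas : ∀ m ∈ Finset.range (n + 1),
        ((cq q (n+1) (m+1) : ℝ) : ℂ) * a ^ (m+1) =
          ((cq q n (m+1) : ℝ) : ℂ) * a ^ (m+1) +
            (q : ℂ) ^ n * (((cq q n m : ℝ) : ℂ) * a ^ m) * a := by
      intro m hm
      rw [Finset.mem_range] at hm
      rw [cq_pascal hq0 hq1 (Nat.lt_succ_iff.mp hm)]
      push_cast
      ring
    rw [Finset.sum_congr rfl hpas, Finset.sum_add_distrib]
    have h1 : ∑ m ∈ Finset.range (n+1), ((cq q n (m+1) : ℝ) : ℂ) * a ^ (m+1)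
        = (∑ m ∈ Finset.range (n+1+1), ((cq q n m : ℝ) : ℂ) * a ^ m) - 1 := by
      rw [Finset.sum_range_succ' (fun m => ((cq q n m : ℝ) : ℂ) * a ^ m) (n+1)]
      simp [cq_zero hq0 hq1]
    have h2 : ∑ m ∈ Finset.range (n+1+1), ((cq q n m : ℝ) : ℂ) * a ^ m
        = ∑ m ∈ Finset.range (n+1), ((cq q n m : ℝ) : ℂ) * a ^ m := by
      rw [Finset.sum_range_succ, cq_of_gt (Nat.lt_succ_self n)]
      simp
    rw [h1, h2, cq_zero hq0 hq1]
    have h3 : ∑ x ∈ Finset.range (n+1), (q:ℂ) ^ n * (((cq q n x : ℝ):ℂ) * a ^ x) * a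
        = ((q:ℂ) ^ n * a) * ∑ m ∈ Finset.range (n+1), ((cq q n m : ℝ):ℂ) * a ^ m := by
      rw [Finset.mul_sum]
      exact Finset.sum_congr rfl fun m _ => by ring
    rw [h3]
    push_cast
    ring

/-- The infinite q-Pochhammer product `(q;q)_∞`. -/
def Pinf (q : ℝ) : ℝ := ∏' k : ℕ, (1 - q ^ (k + 1))

lemma summable_log_Pq (hq0 : 0 < q) (hq1 : q < 1) :
    Summable (fun k : ℕ => Real.log (1 - q ^ (k + 1))) := by
  apply Summable.of_norm_bounded (g := fun k : ℕ => q ^ (k + 1) / (1 - q))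
  · have : Summable (fun k : ℕ => q ^ k) := summable_geometric_of_lt_one hq0.le hq1
    exact ((this.mul_left q).div_const (1 - q)).congr fun k => by
      rw [pow_succ]; ring
  · intro k
    have hx0 : 0 < q ^ (k + 1) := pow_pos hq0 _
    have hx1 : q ^ (k + 1) < 1 := pow_lt_one₀ hq0.le hq1 (Nat.succ_ne_zero k)
    have hxq : q ^ (k + 1) ≤ q := by
      calc q ^ (k + 1) ≤ q ^ 1 := pow_le_pow_of_le_one hq0.le hq1.le (by omega)
      _ = q := pow_one q
    have hpos : 0 < 1 - q ^ (k + 1) := by linarith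
    have hneg : Real.log (1 - q ^ (k + 1)) ≤ 0 :=
      Real.log_nonpos (by linarith) (by linarith)
    rw [Real.norm_eq_abs, abs_of_nonpos hneg]
    have : Real.log (1 - q ^ (k + 1))⁻¹ ≤ (1 - q ^ (k + 1))⁻¹ - 1 :=
      Real.log_le_sub_one_of_pos (by positivity)
    rw [Real.log_inv] at this
    have hinv : (1 - q ^ (k + 1))⁻¹ - 1 = q ^ (k + 1) / (1 - q ^ (k + 1)) := by
      field_simp
      ring
    rw [hinv] at this
    have hle : q ^ (k + 1) / (1 - q ^ (k + 1)) ≤ q ^ (k + 1) / (1 - q) := by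
      apply div_le_div_of_nonneg_left hx0.le (by linarith) (by linarith)
    linarith

lemma hasProd_Pq (hq0 : 0 < q) (hq1 : q < 1) :
    HasProd (fun k : ℕ => 1 - q ^ (k + 1))
      (Real.exp (∑' k : ℕ, Real.log (1 - q ^ (k + 1)))) := by
  have h := (summable_log_Pq hq0 hq1).hasSum.rexp
  have e : (Real.exp ∘ fun k : ℕ => Real.log (1 - q ^ (k + 1)))
      = fun k : ℕ => 1 - q ^ (k + 1) := by
    funext k
    have : q ^ (k + 1) < 1 := pow_lt_one₀ hq0.le hq1 (Nat.succ_ne_zero k)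
    exact Real.exp_log (by linarith)
  rwa [e] at h

lemma Pinf_pos (hq0 : 0 < q) (hq1 : q < 1) : 0 < Pinf q := by
  rw [Pinf, (hasProd_Pq hq0 hq1).tprod_eq]
  exact Real.exp_pos _

lemma tendsto_Pq (hq0 : 0 < q) (hq1 : q < 1) :
    Tendsto (fun n => Pq q n) atTop (nhds (Pinf q)) := by
  have h := (hasProd_Pq hq0 hq1).tendsto_prod_nat
  rw [Pinf, (hasProd_Pq hq0 hq1).tprod_eq]
  exact h

lemma Pinf_le_Pq (hq0 : 0 < q) (hq1 : q < 1) (n : ℕ) : Pinf q ≤ Pq q n := by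
  apply le_of_tendsto (tendsto_Pq hq0 hq1)
  filter_upwards [eventually_ge_atTop n] with m hm
  exact Pq_antitone hq0 hq1 hm

lemma cq_nonneg (hq0 : 0 < q) (hq1 : q < 1) (n m : ℕ) : 0 ≤ cq q n m := by
  rw [cq]
  split
  · have := Pq_pos hq0 hq1 n
    have := Pq_pos hq0 hq1 m
    have := Pq_pos hq0 hq1 (n - m)
    positivity
  · exact le_rfl

lemma cq_le (hq0 : 0 < q) (hq1 : q < 1) (n m : ℕ) :
    cq q n m ≤ q ^ tri m / Pinf q ^ 2 := by
  have hPi := Pinf_pos hq0 hq1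
  rw [cq]
  split
  · have h1 : Pinf q ≤ Pq q m := Pinf_le_Pq hq0 hq1 m
    have h2 : Pinf q ≤ Pq q (n - m) := Pinf_le_Pq hq0 hq1 (n - m)
    have h3 : Pq q n ≤ 1 := Pq_le_one hq0 hq1 n
    have h4 : 0 < Pq q m := Pq_pos hq0 hq1 m
    have h5 : 0 < Pq q (n - m) := Pq_pos hq0 hq1 (n - m)
    have hq : 0 < q ^ tri m := pow_pos hq0 _
    rw [div_le_div_iff₀ (by positivity) (by positivity), pow_two]
    have hmm : Pinf q * Pinf q ≤ Pq q m * Pq q (n - m) :=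
      mul_le_mul h1 h2 hPi.le h4.le
    calc q ^ tri m * Pq q n * (Pinf q * Pinf q)
        ≤ q ^ tri m * 1 * (Pq q m * Pq q (n - m)) :=
          mul_le_mul (mul_le_mul le_rfl h3 (Pq_pos hq0 hq1 n).le hq.le) hmm
            (by positivity) (by positivity)
      _ = q ^ tri m * (Pq q m * Pq q (n - m)) := by ring
  · positivity

lemma tendsto_cq (hq0 : 0 < q) (hq1 : q < 1) (m : ℕ) :
    Tendsto (fun n => cq q n m) atTop (nhds (q ^ tri m / Pq q m)) := by
  have hPi := (Pinf_pos hq0 hq1).ne'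
  have h1 : Tendsto (fun n : ℕ => Pq q (n - m)) atTop (nhds (Pinf q)) :=
    (tendsto_Pq hq0 hq1).comp (tendsto_sub_atTop_nat m)
  have h2 : Tendsto (fun n : ℕ => q ^ tri m * Pq q n / (Pq q m * Pq q (n - m)))
      atTop (nhds (q ^ tri m / Pq q m)) := by
    have := ((tendsto_Pq hq0 hq1).const_mul (q ^ tri m)).div
      (h1.const_mul (Pq q m)) (mul_ne_zero (Pq_pos hq0 hq1 m).ne' hPi)
    have heq : q ^ tri m / Pq q m = q ^ tri m * Pinf q / (Pq q m * Pinf q) := by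
      rw [eq_comm]; exact mul_div_mul_right _ _ hPi
    rw [heq]
    exact this
  apply h2.congr'
  filter_upwards [eventually_ge_atTop m] with n hn
  rw [cq, if_pos hn]

lemma summable_bound (hq0 : 0 < q) (hq1 : q < 1) (a : ℂ) :
    Summable (fun m : ℕ => q ^ tri m * ‖a‖ ^ m / Pinf q ^ 2) := by
  have hPi := Pinf_pos hq0 hq1
  apply summable_of_ratio_norm_eventually_le (r := 1 / 2) (by norm_num)
  have h0 : Tendsto (fun m : ℕ => q ^ m * ‖a‖) atTop (nhds 0) := by
    simpa using (tendsto_pow_atTop_nhds_zero_of_lt_one hq0.le hq1).mul_const ‖a‖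
  filter_upwards [h0.eventually_le_const (by norm_num : (0:ℝ) < 1/2),
    Filter.Eventually.of_forall (fun m : ℕ => trivial)] with m hm _
  have hfm : (0:ℝ) ≤ q ^ tri m * ‖a‖ ^ m / Pinf q ^ 2 := by positivity
  have hstep : q ^ tri (m + 1) * ‖a‖ ^ (m + 1) / Pinf q ^ 2
      = (q ^ m * ‖a‖) * (q ^ tri m * ‖a‖ ^ m / Pinf q ^ 2) := by
    rw [tri, pow_add, pow_succ]
    ring
  rw [Real.norm_eq_abs, Real.norm_eq_abs, abs_of_nonneg hfm, abs_of_nonneg (by positivity),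
    hstep]
  have : (0:ℝ) ≤ q ^ m * ‖a‖ := by positivity
  exact mul_le_mul_of_nonneg_right hm hfm

lemma norm_aq (hq0 : 0 < q) (a : ℂ) (k : ℕ) : ‖a * (q : ℂ) ^ k‖ = ‖a‖ * q ^ k := by
  rw [norm_mul, norm_pow, Complex.norm_real, Real.norm_eq_abs, abs_of_pos hq0]

lemma mult_one_add (hq0 : 0 < q) (hq1 : q < 1) (a : ℂ) :
    Multipliable (fun k : ℕ => 1 + a * (q : ℂ) ^ k) := by
  by_cases hz : ∀ k : ℕ, 1 + a * (q : ℂ) ^ k ≠ 0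
  · have h0 : Tendsto (fun k : ℕ => ‖a‖ * q ^ k) atTop (nhds 0) := by
      simpa using (tendsto_pow_atTop_nhds_zero_of_lt_one hq0.le hq1).const_mul ‖a‖
    have hsum : Summable (fun k : ℕ => Complex.log (1 + a * (q : ℂ) ^ k)) := by
      apply Summable.of_norm_bounded_eventually_nat (g := fun k => 3 / 2 * (‖a‖ * q ^ k))
      · exact ((summable_geometric_of_lt_one hq0.le hq1).mul_left ‖a‖).mul_left (3 / 2)
      · filter_upwards [h0.eventually_le_const (by norm_num : (0:ℝ) < 1/2)] with k hk
        have := Complex.norm_log_one_add_half_le_self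
          (z := a * (q : ℂ) ^ k) (by rw [norm_aq hq0]; exact hk)
        rwa [norm_aq hq0] at this
    have h := hsum.hasSum.cexp
    have e : (Complex.exp ∘ fun k : ℕ => Complex.log (1 + a * (q : ℂ) ^ k))
        = fun k : ℕ => 1 + a * (q : ℂ) ^ k :=
      funext fun k => Complex.exp_log (hz k)
    rw [e] at h
    exact h.multipliable
  · push_neg at hz
    obtain ⟨j, hj⟩ := hz
    refine ⟨0, ?_⟩
    have hev : ∀ᶠ s : Finset ℕ in atTop, (0 : ℂ) = ∏ k ∈ s, (1 + a * (q : ℂ) ^ k) := by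
      filter_upwards [eventually_ge_atTop {j}] with s hs
      exact (Finset.prod_eq_zero (hs (Finset.mem_singleton_self j)) hj).symm
    exact Tendsto.congr' hev tendsto_const_nhds

lemma tendsto_prod_S (hq0 : 0 < q) (hq1 : q < 1) (a : ℂ) :
    Tendsto (fun n => ∏ k ∈ Finset.range n, (1 + a * (q : ℂ) ^ k)) atTop
      (nhds (∑' m : ℕ, ((q ^ tri m / Pq q m : ℝ) : ℂ) * a ^ m)) := by
  have h := tendsto_tsum_of_dominated_convergence
    (f := fun (n : ℕ) (m : ℕ) => ((cq q n m : ℝ) : ℂ) * a ^ m)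
    (g := fun m : ℕ => ((q ^ tri m / Pq q m : ℝ) : ℂ) * a ^ m)
    (bound := fun m : ℕ => q ^ tri m * ‖a‖ ^ m / Pinf q ^ 2)
    (summable_bound hq0 hq1 a)
    (fun m => ((Complex.continuous_ofReal.tendsto _).comp (tendsto_cq hq0 hq1 m)).mul_const _)
    (by
      filter_upwards with n m
      rw [norm_mul, Complex.norm_real, Real.norm_eq_abs,
        abs_of_nonneg (cq_nonneg hq0 hq1 n m), norm_pow]
      calc cq q n m * ‖a‖ ^ m ≤ (q ^ tri m / Pinf q ^ 2) * ‖a‖ ^ m :=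
            mul_le_mul_of_nonneg_right (cq_le hq0 hq1 n m) (by positivity)
        _ = q ^ tri m * ‖a‖ ^ m / Pinf q ^ 2 := by ring)
  apply h.congr
  intro n
  rw [tsum_eq_sum (s := Finset.range (n + 1)) (by
    intro m hm
    rw [Finset.mem_range, not_lt] at hm
    show ((cq q n m : ℝ) : ℂ) * a ^ m = 0
    rw [cq_of_gt (by omega), Complex.ofReal_zero, zero_mul])]
  exact (key_identity hq0 hq1 a n).symm

/-- Euler's q-exponential identity. -/
lemma euler (hq0 : 0 < q) (hq1 : q < 1) (a : ℂ) :
    ∑' m : ℕ, ((q ^ tri m / Pq q m : ℝ) : ℂ) * a ^ m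
      = ∏' k : ℕ, (1 + a * (q : ℂ) ^ k) :=
  tendsto_nhds_unique (tendsto_prod_S hq0 hq1 a)
    ((mult_one_add hq0 hq1 a).hasProd.tendsto_prod_nat)

lemma tri_real (m : ℕ) : ((tri m : ℕ) : ℝ) = (m : ℝ) * ((m : ℝ) - 1) / 2 := by
  induction m with
  | zero => simp [tri]
  | succ m ih =>
    rw [tri]
    push_cast
    push_cast at ih
    rw [ih]
    ring

lemma Pq_cast (m : ℕ) : ((Pq q m : ℝ) : ℂ) = ∏ k ∈ Finset.range m, (1 - (q : ℂ) ^ (k + 1)) := by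
  rw [Pq]
  push_cast
  rfl

lemma exp_split (hq0 : 0 < q) (m : ℕ) :
    q ^ ((m : ℝ) * ((m : ℝ) - 1) / 2 + 3 * (m : ℝ) / 4)
      = q ^ tri m * (q ^ ((3 : ℝ) / 4)) ^ m := by
  rw [Real.rpow_add hq0, ← tri_real, Real.rpow_natCast]
  congr 1
  rw [show 3 * (m : ℝ) / 4 = (3 : ℝ) / 4 * (m : ℕ) by push_cast; ring,
    Real.rpow_mul hq0.le, Real.rpow_natCast]

lemma sum_eq_euler (hq0 : 0 < q) (hq1 : q < 1) (z : ℂ) (c : ℂ) (hc : c ^ 2 = -1) :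
    (∑' m : ℕ, c ^ m * z ^ m *
        ((q ^ ((m : ℝ) * ((m : ℝ) - 1) / 2 + 3 * (m : ℝ) / 4) : ℝ) : ℂ) /
        ∏ k ∈ Finset.range m, (1 - (q : ℂ) ^ (k + 1)))
      = ∏' k : ℕ, (1 + (c * z * ((q ^ ((3 : ℝ) / 4) : ℝ) : ℂ)) * (q : ℂ) ^ k) := by
  rw [← euler hq0 hq1]
  apply tsum_congr
  intro m
  rw [exp_split hq0, ← Pq_cast]
  push_cast [mul_pow]
  ring

/-- For `0 < q < 1` and any `z ∈ ℂ`,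
`(∑_{m ≥ 0} i^m z^m q^(m(m-1)/2 + 3m/4) / (q;q)_m) ·
 (∑_{n ≥ 0} (-i)^n z^n q^(n(n-1)/2 + 3n/4) / (q;q)_n)
   = (-z² q^(3/2); q²)_∞ = ∏_{k ≥ 0} (1 + z² q^(3/2 + 2k))`. -/
theorem stmt_10 (q : ℝ) (hq0 : 0 < q) (hq1 : q < 1) (z : ℂ) :
    (∑' m : ℕ, Complex.I ^ m * z ^ m *
        ((q ^ ((m : ℝ) * ((m : ℝ) - 1) / 2 + 3 * (m : ℝ) / 4) : ℝ) : ℂ) /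
        ∏ k ∈ Finset.range m, (1 - (q : ℂ) ^ (k + 1))) *
    (∑' n : ℕ, (-Complex.I) ^ n * z ^ n *
        ((q ^ ((n : ℝ) * ((n : ℝ) - 1) / 2 + 3 * (n : ℝ) / 4) : ℝ) : ℂ) /
        ∏ k ∈ Finset.range n, (1 - (q : ℂ) ^ (k + 1))) =
    ∏' k : ℕ, (1 + z ^ 2 * ((q ^ ((3 : ℝ) / 2 + 2 * (k : ℝ)) : ℝ) : ℂ)) := by
  rw [sum_eq_euler hq0 hq1 z Complex.I Complex.I_sq,
    sum_eq_euler hq0 hq1 z (-Complex.I) (by rw [neg_pow, Complex.I_sq]; norm_num),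
    ← Multipliable.tprod_mul (mult_one_add hq0 hq1 _) (mult_one_add hq0 hq1 _)]
  apply tprod_congr
  intro k
  have hre : q ^ ((3 : ℝ) / 2 + 2 * (k : ℝ)) = (q ^ ((3 : ℝ) / 4)) ^ 2 * (q ^ k) ^ 2 := by
    rw [Real.rpow_add hq0]
    congr 1
    · rw [← Real.rpow_natCast (q ^ ((3:ℝ)/4)) 2, ← Real.rpow_mul hq0.le]
      norm_num
    · rw [show (2 : ℝ) * (k : ℝ) = ((k * 2 : ℕ) : ℝ) by push_cast; ring,
        Real.rpow_natCast, pow_mul]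
  rw [hre]
  have hI : (Complex.I) ^ 2 = -1 := Complex.I_sq
  push_cast
  linear_combination (-(z ^ 2) * (((q ^ ((3:ℝ)/4) : ℝ) : ℂ)) ^ 2 * ((q : ℂ) ^ k) ^ 2) * hI
end
end

section
/- For every real number q with 0 < q < 1 and every complex number z with |z| < q^{-3/2}, the product of the two series ∑_{m=0}^{∞} i^m z^m q^{3m/2} / (q²;q²)_m and ∑_{n=0}^{∞} (-i)^n z^n q^{3n/2} / (q²;q²)_n equals 1 / (-z² q³; q⁴)_∞ = 1 / ∏_{k=0}^{∞} (1 + z² q^{3 + 4k}). -/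
set_option maxHeartbeats 1000000

open Filter Finset Topology

namespace Stmt11Aux

noncomputable def P (q : ℝ) (m : ℕ) : ℂ := ∏ k ∈ Finset.range m, (1 - (q : ℂ) ^ (2 * k + 2))

noncomputable def S (q : ℝ) (x : ℂ) : ℂ := ∑' m : ℕ, x ^ m / P q m

variable {q : ℝ}

lemma normq (hq0 : 0 < q) (n : ℕ) : ‖(q : ℂ) ^ n‖ = q ^ n := by
  simp [norm_pow, Complex.norm_real, Real.norm_eq_abs, abs_of_pos hq0]

lemma factor_ne (hq0 : 0 < q) (hq1 : q < 1) (k : ℕ) : (1 - (q : ℂ) ^ (2 * k + 2)) ≠ 0 := by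
  intro h
  rw [sub_eq_zero] at h
  have h2 : q ^ (2 * k + 2) < 1 := pow_lt_one₀ hq0.le hq1 (by omega)
  have : ((q ^ (2 * k + 2) : ℝ) : ℂ) = ((1 : ℝ) : ℂ) := by push_cast; rw [← h]
  have := Complex.ofReal_injective this
  linarith

lemma P_ne (hq0 : 0 < q) (hq1 : q < 1) (m : ℕ) : P q m ≠ 0 :=
  Finset.prod_ne_zero_iff.2 fun k _ => factor_ne hq0 hq1 k

lemma norm_factor (hq0 : 0 < q) (hq1 : q < 1) (k : ℕ) :
    ‖(1 - (q : ℂ) ^ (2 * k + 2))‖ = 1 - q ^ (2 * k + 2) := by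
  have h2 : q ^ (2 * k + 2) < 1 := pow_lt_one₀ hq0.le hq1 (by omega)
  have : (1 - (q : ℂ) ^ (2 * k + 2)) = (((1 - q ^ (2 * k + 2)) : ℝ) : ℂ) := by push_cast; ring
  rw [this, Complex.norm_real, Real.norm_eq_abs, abs_of_pos (by linarith)]

lemma tendsto_qpow (hq0 : 0 < q) (hq1 : q < 1) :
    Tendsto (fun n : ℕ => q ^ (2 * n + 2)) atTop (𝓝 0) := by
  have h1 : Tendsto (fun n : ℕ => q ^ n) atTop (𝓝 0) :=
    tendsto_pow_atTop_nhds_zero_of_lt_one hq0.le hq1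
  have h2 : Tendsto (fun n : ℕ => 2 * n + 2) atTop atTop :=
    tendsto_atTop_mono (f := id) (fun n => by simp only [id_eq]; omega) tendsto_id
  exact h1.comp h2

lemma summable_S (hq0 : 0 < q) (hq1 : q < 1) (x : ℂ) (hx : ‖x‖ < 1) :
    Summable (fun m : ℕ => x ^ m / P q m) := by
  by_cases hx0 : x = 0
  · apply summable_of_ne_finset_zero (s := {0})
    intro m hm
    simp only [Finset.mem_singleton] at hm
    simp [hx0, zero_pow hm]
  · apply summable_of_ratio_test_tendsto_lt_one hx
    · exact Eventually.of_forall fun n =>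
        div_ne_zero (pow_ne_zero _ hx0) (P_ne hq0 hq1 n)
    · have key : ∀ n : ℕ, ‖x ^ (n + 1) / P q (n + 1)‖ / ‖x ^ n / P q n‖
          = ‖x‖ / (1 - q ^ (2 * n + 2)) := by
        intro n
        have hP1 : P q (n + 1) = P q n * (1 - (q : ℂ) ^ (2 * n + 2)) :=
          Finset.prod_range_succ _ n
        have hdiv : x ^ (n + 1) / P q (n + 1) / (x ^ n / P q n)
            = x / (1 - (q : ℂ) ^ (2 * n + 2)) := by
          rw [hP1, pow_succ, div_div_div_comm, mul_comm (x ^ n) x, mul_div_assoc,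
            div_self (pow_ne_zero n hx0), mul_one,
            mul_comm (P q n), mul_div_assoc, div_self (P_ne hq0 hq1 n), mul_one]
        rw [← norm_div, hdiv, norm_div, norm_factor hq0 hq1 n]
      have hlim : Tendsto (fun n : ℕ => ‖x‖ / (1 - q ^ (2 * n + 2))) atTop (𝓝 (‖x‖ / (1 - 0))) :=
        Tendsto.div tendsto_const_nhds (tendsto_const_nhds.sub (tendsto_qpow hq0 hq1))
          (by norm_num)
      have hlim' : Tendsto (fun n : ℕ => ‖x‖ / (1 - q ^ (2 * n + 2))) atTop (𝓝 ‖x‖) := by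
        simpa using hlim
      exact Tendsto.congr (fun n => (key n).symm) hlim'

lemma norm_q2x_le (hq0 : 0 < q) (hq1 : q < 1) (x : ℂ) (hx : ‖x‖ < 1) :
    ‖(q : ℂ) ^ 2 * x‖ < 1 := by
  rw [norm_mul, normq hq0]
  have h1 : q ^ 2 ≤ 1 := pow_le_one₀ hq0.le hq1.le
  have := norm_nonneg x
  nlinarith

lemma feq (hq0 : 0 < q) (hq1 : q < 1) (x : ℂ) (hx : ‖x‖ < 1) :
    S q x - x * S q x = S q ((q : ℂ) ^ 2 * x) := by
  have hs := summable_S hq0 hq1 x hx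
  have hcx : ‖(q : ℂ) ^ 2 * x‖ < 1 := norm_q2x_le hq0 hq1 x hx
  have hsc := summable_S hq0 hq1 _ hcx
  have hs' : Summable (fun m : ℕ => x ^ (m + 1) / P q (m + 1)) :=
    (summable_nat_add_iff 1).2 hs
  have hB : Summable (fun m : ℕ => x ^ (m + 1) / P q m) := by
    have := hs.mul_left x
    refine this.congr fun m => ?_
    rw [pow_succ, mul_comm (x ^ m) x, mul_div_assoc]
  have hterm : ∀ m : ℕ, x ^ (m + 1) / P q (m + 1) - x ^ (m + 1) / P q m
      = ((q : ℂ) ^ 2 * x) ^ (m + 1) / P q (m + 1) := by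
    intro m
    have hP1 : P q (m + 1) = P q m * (1 - (q : ℂ) ^ (2 * m + 2)) :=
      Finset.prod_range_succ _ m
    have hc : ((q : ℂ) ^ 2 * x) ^ (m + 1) = (q : ℂ) ^ (2 * m + 2) * x ^ (m + 1) := by
      rw [mul_pow, ← pow_mul, show 2 * (m + 1) = 2 * m + 2 from by ring]
    rw [hc, hP1]
    have h1 := P_ne hq0 hq1 m
    have h2 := factor_ne hq0 hq1 m
    field_simp
    ring
  have e1 : S q x = 1 + ∑' m : ℕ, x ^ (m + 1) / P q (m + 1) := by
    rw [S, Summable.tsum_eq_zero_add hs]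
    simp [P]
  have e2 : x * S q x = ∑' m : ℕ, x ^ (m + 1) / P q m := by
    rw [S, ← tsum_mul_left]
    exact tsum_congr fun m => by rw [pow_succ, mul_comm (x ^ m) x, mul_div_assoc]
  have e3 : S q ((q : ℂ) ^ 2 * x) = 1 + ∑' m : ℕ, ((q : ℂ) ^ 2 * x) ^ (m + 1) / P q (m + 1) := by
    rw [S, Summable.tsum_eq_zero_add hsc]
    simp [P]
  rw [e2, e1, e3]
  have : ∑' m : ℕ, ((q : ℂ) ^ 2 * x) ^ (m + 1) / P q (m + 1)
      = (∑' m : ℕ, x ^ (m + 1) / P q (m + 1)) - ∑' m : ℕ, x ^ (m + 1) / P q m := by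
    rw [← Summable.tsum_sub hs' hB]
    exact tsum_congr fun m => (hterm m).symm
  rw [this]
  ring

lemma norm_cn_x (hq0 : 0 < q) (hq1 : q < 1) (x : ℂ) (hx : ‖x‖ < 1) (n : ℕ) :
    ‖((q : ℂ) ^ 2) ^ n * x‖ < 1 := by
  rw [norm_mul, norm_pow, normq hq0]
  have h1 : (q ^ 2) ^ n ≤ 1 := pow_le_one₀ (by positivity) (pow_le_one₀ hq0.le hq1.le)
  have h2 : (0:ℝ) < (q ^ 2) ^ n := by positivity
  have := norm_nonneg x
  nlinarith

lemma iter (hq0 : 0 < q) (hq1 : q < 1) :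
    ∀ (n : ℕ) (x : ℂ), ‖x‖ < 1 →
      S q x * ∏ k ∈ Finset.range n, (1 - ((q : ℂ) ^ 2) ^ k * x) = S q (((q : ℂ) ^ 2) ^ n * x) := by
  intro n
  induction n with
  | zero => intro x hx; simp
  | succ n ih =>
      intro x hx
      have hcx : ‖(q : ℂ) ^ 2 * x‖ < 1 := norm_q2x_le hq0 hq1 x hx
      have hmain : S q x * (1 - x) = S q ((q : ℂ) ^ 2 * x) := by
        have := feq hq0 hq1 x hx
        rw [← this]; ring
      rw [Finset.prod_range_succ']
      have step1 : ∏ k ∈ Finset.range n, (1 - ((q : ℂ) ^ 2) ^ (k + 1) * x)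
          = ∏ k ∈ Finset.range n, (1 - ((q : ℂ) ^ 2) ^ k * ((q : ℂ) ^ 2 * x)) :=
        Finset.prod_congr rfl fun k _ => by rw [pow_succ]; ring_nf
      calc S q x * ((∏ k ∈ Finset.range n, (1 - ((q : ℂ) ^ 2) ^ (k + 1) * x)) *
              (1 - ((q : ℂ) ^ 2) ^ 0 * x))
          = (S q x * (1 - x)) * ∏ k ∈ Finset.range n, (1 - ((q : ℂ) ^ 2) ^ k * ((q : ℂ) ^ 2 * x)) := by
            rw [step1]; ring
        _ = S q ((q : ℂ) ^ 2 * x) * ∏ k ∈ Finset.range n, (1 - ((q : ℂ) ^ 2) ^ k * ((q : ℂ) ^ 2 * x)) := by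
            rw [hmain]
        _ = S q (((q : ℂ) ^ 2) ^ n * ((q : ℂ) ^ 2 * x)) := ih _ hcx
        _ = S q (((q : ℂ) ^ 2) ^ (n + 1) * x) := by rw [pow_succ]; ring_nf

set_option maxHeartbeats 1000000 in
lemma tend (hq0 : 0 < q) (hq1 : q < 1) (x : ℂ) (hx : ‖x‖ < 1) :
    Tendsto (fun n : ℕ => S q (((q : ℂ) ^ 2) ^ n * x)) atTop (𝓝 1) := by
  set M : ℝ := ∑' m : ℕ, ‖x ^ (m + 1) / P q (m + 1)‖ with hM
  have hs := summable_S hq0 hq1 x hx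
  have hs' : Summable (fun m : ℕ => x ^ (m + 1) / P q (m + 1)) :=
    (summable_nat_add_iff 1).2 hs
  have hsn : Summable (fun m : ℕ => ‖x ^ (m + 1) / P q (m + 1)‖) :=
    summable_norm_iff.2 hs'
  have key : ∀ n : ℕ, ‖S q (((q : ℂ) ^ 2) ^ n * x) - 1‖ ≤ (q ^ 2) ^ n * M := by
    intro n
    obtain ⟨y, hy⟩ : ∃ y : ℂ, y = ((q : ℂ) ^ 2) ^ n * x := ⟨_, rfl⟩
    rw [← hy]
    have hyx : ‖y‖ < 1 := hy ▸ norm_cn_x hq0 hq1 x hx n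
    have hsy := summable_S hq0 hq1 y hyx
    have hsy' : Summable (fun m : ℕ => y ^ (m + 1) / P q (m + 1)) :=
      (summable_nat_add_iff (f := fun m : ℕ => y ^ m / P q m) 1).2 hsy
    have hsyn : Summable (fun m : ℕ => ‖y ^ (m + 1) / P q (m + 1)‖) :=
      summable_norm_iff.2 hsy'
    have e1 : S q y - 1 = ∑' m : ℕ, y ^ (m + 1) / P q (m + 1) := by
      rw [S, Summable.tsum_eq_zero_add hsy]
      simp [P]
    rw [e1]
    calc ‖∑' m : ℕ, y ^ (m + 1) / P q (m + 1)‖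
        ≤ ∑' m : ℕ, ‖y ^ (m + 1) / P q (m + 1)‖ := norm_tsum_le_tsum_norm hsyn
      _ ≤ ∑' m : ℕ, (q ^ 2) ^ n * ‖x ^ (m + 1) / P q (m + 1)‖ := by
          apply Summable.tsum_le_tsum _ hsyn (hsn.mul_left _)
          intro m
          have hnorm : ‖y ^ (m + 1) / P q (m + 1)‖
              = ((q ^ 2) ^ n) ^ (m + 1) * ‖x ^ (m + 1) / P q (m + 1)‖ := by
            rw [norm_div, norm_div, norm_pow, norm_pow, hy, norm_mul, norm_pow, normq hq0,
              mul_pow, mul_div_assoc]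
          rw [hnorm]
          have h1 : ((q ^ 2) ^ n) ^ (m + 1) ≤ (q ^ 2) ^ n := by
            calc ((q ^ 2) ^ n) ^ (m + 1) ≤ ((q ^ 2) ^ n) ^ 1 :=
                  pow_le_pow_of_le_one (by positivity)
                    (pow_le_one₀ (by positivity) (pow_le_one₀ hq0.le hq1.le)) (by omega)
              _ = (q ^ 2) ^ n := pow_one _
          exact mul_le_mul_of_nonneg_right h1 (norm_nonneg _)
      _ = (q ^ 2) ^ n * M := tsum_mul_left
  have hbound : Tendsto (fun n : ℕ => (q ^ 2) ^ n * M) atTop (𝓝 0) := by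
    have := (tendsto_pow_atTop_nhds_zero_of_lt_one (by positivity : (0:ℝ) ≤ q ^ 2)
      (by nlinarith : q ^ 2 < 1)).mul_const M
    simpa using this
  have h0 : Tendsto (fun n : ℕ => S q (((q : ℂ) ^ 2) ^ n * x) - 1) atTop (𝓝 0) :=
    squeeze_zero_norm key hbound
  have := h0.add_const (1 : ℂ)
  simpa using this

end Stmt11Aux

open Stmt11Aux

/-- For `0 < q < 1` and any `z ∈ ℂ` with `|z| < q^(-3/2)`,
`(∑_{m ≥ 0} i^m z^m q^(3m/2) / (q²;q²)_m) · (∑_{n ≥ 0} (-i)^n z^n q^(3n/2) / (q²;q²)_n)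
   = 1 / (-z² q³; q⁴)_∞ = 1 / ∏_{k ≥ 0} (1 + z² q^(3 + 4k))`. -/
theorem stmt_11 (q : ℝ) (hq0 : 0 < q) (hq1 : q < 1) (z : ℂ)
    (hz : ‖z‖ < q ^ (-(3 : ℝ) / 2)) :
    (∑' m : ℕ, Complex.I ^ m * z ^ m * ((q ^ (3 * (m : ℝ) / 2) : ℝ) : ℂ) /
        ∏ k ∈ Finset.range m, (1 - (q : ℂ) ^ (2 * k + 2))) *
    (∑' n : ℕ, (-Complex.I) ^ n * z ^ n * ((q ^ (3 * (n : ℝ) / 2) : ℝ) : ℂ) /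
        ∏ k ∈ Finset.range n, (1 - (q : ℂ) ^ (2 * k + 2))) =
    1 / ∏' k : ℕ, (1 + z ^ 2 * (q : ℂ) ^ (3 + 4 * k)) := by
  have hq32 : 0 < q ^ ((3:ℝ)/2) := Real.rpow_pos_of_pos hq0 _
  obtain ⟨r, hrdef⟩ : ∃ r : ℂ, r = ((q ^ ((3:ℝ)/2) : ℝ) : ℂ) := ⟨_, rfl⟩
  have hr2 : r ^ 2 = (q : ℂ) ^ 3 := by
    rw [hrdef]
    have h1 : (q ^ ((3:ℝ)/2)) ^ (2:ℕ) = q ^ (3:ℕ) := by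
      rw [← Real.rpow_natCast (q ^ ((3:ℝ)/2)) 2, ← Real.rpow_mul hq0.le,
        ← Real.rpow_natCast q 3]
      norm_num
    calc ((((q ^ ((3:ℝ)/2)) : ℝ)) : ℂ) ^ 2 = (((q ^ ((3:ℝ)/2)) ^ (2:ℕ) : ℝ) : ℂ) := by
          push_cast; ring
      _ = ((q ^ (3:ℕ) : ℝ) : ℂ) := by rw [h1]
      _ = (q:ℂ) ^ 3 := by push_cast; ring
  have hrm : ∀ m : ℕ, ((q ^ (3 * (m:ℝ) / 2) : ℝ) : ℂ) = r ^ m := by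
    intro m
    rw [hrdef]
    have h1 : q ^ (3 * (m:ℝ) / 2) = (q ^ ((3:ℝ)/2)) ^ m := by
      rw [← Real.rpow_natCast (q ^ ((3:ℝ)/2)) m, ← Real.rpow_mul hq0.le]
      congr 1; ring
    rw [h1]; push_cast; ring
  have hnr : ‖r‖ = q ^ ((3:ℝ)/2) := by
    rw [hrdef]; simp [Complex.norm_real, Real.norm_eq_abs, abs_of_pos hq32]
  have hzr : ‖z‖ * q ^ ((3:ℝ)/2) < 1 := by
    have h2 : ‖z‖ * q ^ ((3:ℝ)/2) < q ^ (-(3:ℝ)/2) * q ^ ((3:ℝ)/2) :=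
      mul_lt_mul_of_pos_right hz hq32
    have h3 : q ^ (-(3:ℝ)/2) * q ^ ((3:ℝ)/2) = 1 := by
      rw [← Real.rpow_add hq0, show -(3:ℝ)/2 + (3:ℝ)/2 = 0 by ring, Real.rpow_zero]
    linarith
  have hx1 : ‖Complex.I * z * r‖ < 1 := by
    rw [norm_mul, norm_mul, Complex.norm_I, one_mul, hnr]
    simpa using hzr
  have hx2 : ‖-Complex.I * z * r‖ < 1 := by
    rw [norm_mul, norm_mul, norm_neg, Complex.norm_I, one_mul, hnr]
    simpa using hzr
  have e1 : (∑' m : ℕ, Complex.I ^ m * z ^ m * ((q ^ (3 * (m : ℝ) / 2) : ℝ) : ℂ) /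
        ∏ k ∈ Finset.range m, (1 - (q : ℂ) ^ (2 * k + 2)))
      = S q (Complex.I * z * r) := by
    rw [S]
    refine tsum_congr fun m => ?_
    simp only [P]
    rw [hrm m, mul_pow, mul_pow]
  have e2 : (∑' n : ℕ, (-Complex.I) ^ n * z ^ n * ((q ^ (3 * (n : ℝ) / 2) : ℝ) : ℂ) /
        ∏ k ∈ Finset.range n, (1 - (q : ℂ) ^ (2 * k + 2)))
      = S q (-Complex.I * z * r) := by
    rw [S]
    refine tsum_congr fun n => ?_
    simp only [P]
    rw [hrm n, mul_pow, mul_pow]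
  have hz2 : ‖z‖ ^ 2 < q ^ (-(3:ℝ)) := by
    have h4 : q ^ (-(3:ℝ)/2) * q ^ (-(3:ℝ)/2) = q ^ (-(3:ℝ)) := by
      rw [← Real.rpow_add hq0]; norm_num
    nlinarith [norm_nonneg z, Real.rpow_pos_of_pos hq0 (-(3:ℝ)/2)]
  have hw : ∀ k : ℕ, ‖z ^ 2 * (q:ℂ) ^ (3 + 4*k)‖ = ‖z‖ ^ 2 * q ^ (3 + 4*k) := by
    intro k
    rw [norm_mul, norm_pow, normq hq0]
  have hwlt : ∀ k : ℕ, ‖z ^ 2 * (q:ℂ) ^ (3 + 4*k)‖ < 1 := by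
    intro k
    rw [hw k]
    have h6 : q ^ ((3+4*k:ℕ):ℝ) = q ^ (3+4*k:ℕ) := Real.rpow_natCast q _
    have h5 : q ^ (-(3:ℝ)) * q ^ ((3 + 4*k : ℕ) : ℝ) = q ^ (4*k:ℕ) := by
      rw [← Real.rpow_add hq0, ← Real.rpow_natCast q (4*k)]
      congr 1; push_cast; ring
    have h9 : 0 < q ^ (3+4*k:ℕ) := by positivity
    calc ‖z‖ ^ 2 * q ^ (3+4*k) < q ^ (-(3:ℝ)) * q ^ ((3+4*k:ℕ):ℝ) := by
          rw [h6]; exact mul_lt_mul_of_pos_right hz2 h9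
      _ = q ^ (4*k:ℕ) := h5
      _ ≤ 1 := pow_le_one₀ hq0.le hq1.le
  have hfn : ∀ k : ℕ, (1 : ℂ) + z^2*(q:ℂ)^(3+4*k) ≠ 0 := by
    intro k h
    have h' : z^2*(q:ℂ)^(3+4*k) = -1 := by linear_combination h
    have : ‖z^2*(q:ℂ)^(3+4*k)‖ = 1 := by rw [h']; simp
    linarith [hwlt k, this.symm.le]
  have hnorm_geo : ∀ k : ℕ, ‖z^2*(q:ℂ)^(3+4*k)‖ = (‖z‖^2 * q^3) * (q^4)^k := by
    intro k
    rw [hw k, pow_add, pow_mul]; ring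
  have hlog : Summable (fun k : ℕ => Complex.log (1 + z^2*(q:ℂ)^(3+4*k))) := by
    apply Summable.of_norm_bounded_eventually_nat
      (g := fun k => 3/2 * ((‖z‖ ^2 * q^3) * (q^4)^k))
    · apply Summable.mul_left
      apply Summable.mul_left
      exact summable_geometric_of_lt_one (by positivity) (pow_lt_one₀ hq0.le hq1 (by norm_num))
    · have htend : Tendsto (fun k : ℕ => ‖z^2*(q:ℂ)^(3+4*k)‖) atTop (𝓝 0) := by
        have hgeo : Tendsto (fun k : ℕ => (‖z‖^2 * q^3) * (q^4)^k) atTop (𝓝 0) := by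
          have := (tendsto_pow_atTop_nhds_zero_of_lt_one
            (by positivity : (0:ℝ) ≤ q^4) (pow_lt_one₀ hq0.le hq1 (by norm_num) : q^4 < 1)).const_mul
            (‖z‖^2 * q^3)
          simpa using this
        exact hgeo.congr fun k => (hnorm_geo k).symm
      filter_upwards [htend.eventually_le_const (by norm_num : (0:ℝ) < 1/2)] with k hk
      calc ‖Complex.log (1 + z^2*(q:ℂ)^(3+4*k))‖ ≤ 3/2 * ‖z^2*(q:ℂ)^(3+4*k)‖ :=
            Complex.norm_log_one_add_half_le_self hk
        _ = 3/2 * ((‖z‖^2 * q^3) * (q^4)^k) := by rw [hnorm_geo k]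
  have hM : Multipliable (fun k : ℕ => 1 + z^2*(q:ℂ)^(3+4*k)) :=
    Complex.multipliable_of_summable_log hlog
  have hfac : ∀ k : ℕ, (1 - ((q:ℂ)^2)^k * (Complex.I*z*r)) *
      (1 - ((q:ℂ)^2)^k * (-Complex.I*z*r)) = 1 + z^2*(q:ℂ)^(3+4*k) := by
    intro k
    have h1 : ((q:ℂ)^2)^k = (q:ℂ)^(2*k) := (pow_mul _ 2 k).symm
    have h2 : (q:ℂ)^(3+4*k) = (q:ℂ)^3 * ((q:ℂ)^(2*k))^2 := by
      rw [← pow_mul, ← pow_add]; congr 1; ring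
    rw [h1, h2, ← hr2]
    linear_combination (-(q:ℂ)^(2*k) * (q:ℂ)^(2*k) * z^2 * r^2) * Complex.I_sq
  have hQ : ∀ n : ℕ, (∏ k ∈ Finset.range n, (1 - ((q:ℂ)^2)^k * (Complex.I*z*r))) *
      (∏ k ∈ Finset.range n, (1 - ((q:ℂ)^2)^k * (-Complex.I*z*r)))
      = ∏ k ∈ Finset.range n, (1 + z^2*(q:ℂ)^(3+4*k)) := by
    intro n
    rw [← Finset.prod_mul_distrib]
    exact Finset.prod_congr rfl fun k _ => hfac k
  have key : ∀ n : ℕ, (S q (Complex.I*z*r) * S q (-Complex.I*z*r)) *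
      ∏ k ∈ Finset.range n, (1 + z^2*(q:ℂ)^(3+4*k))
      = S q (((q:ℂ)^2)^n * (Complex.I*z*r)) * S q (((q:ℂ)^2)^n * (-Complex.I*z*r)) := by
    intro n
    rw [← hQ n, ← iter hq0 hq1 n _ hx1, ← iter hq0 hq1 n _ hx2]
    ring
  have hT1 : Tendsto (fun n : ℕ => (S q (Complex.I*z*r) * S q (-Complex.I*z*r)) *
      ∏ k ∈ Finset.range n, (1 + z^2*(q:ℂ)^(3+4*k))) atTop
      (𝓝 ((S q (Complex.I*z*r) * S q (-Complex.I*z*r)) *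
        ∏' k : ℕ, (1 + z^2*(q:ℂ)^(3+4*k)))) :=
    tendsto_const_nhds.mul hM.hasProd.tendsto_prod_nat
  have hT2 : Tendsto (fun n : ℕ => (S q (Complex.I*z*r) * S q (-Complex.I*z*r)) *
      ∏ k ∈ Finset.range n, (1 + z^2*(q:ℂ)^(3+4*k))) atTop (𝓝 1) := by
    have h := (tend hq0 hq1 _ hx1).mul (tend hq0 hq1 _ hx2)
    have h' := h.congr (fun n => (key n).symm)
    simpa using h'
  have hAT : (S q (Complex.I*z*r) * S q (-Complex.I*z*r)) *
      ∏' k : ℕ, (1 + z^2*(q:ℂ)^(3+4*k)) = 1 := tendsto_nhds_unique hT1 hT2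
  have hT0 : (∏' k : ℕ, (1 + z^2*(q:ℂ)^(3+4*k))) ≠ 0 := by
    intro h
    rw [h, mul_zero] at hAT
    exact zero_ne_one hAT
  rw [e1, e2, eq_div_iff hT0]
  exact hAT
end
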